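/- arXiv:2301.00278 — 8 statements merged into one kernel-verified Lean document; each statement's English description precedes it below -/
import Mathlib

section
/- Let G be a connected graph, r a vertex, and P an isometric path between vertices x and y. Then the length of P is at least |d(r,x) - d(r,y)| + |A_r(P)| - 1, where A_r(P) is a maximum antichain set of vertices of P with respect to r. -/
open SimpleGraph

variable {V : Type*}

/-- One step of the BFS DAG `G_r`: the edge `ab` is oriented from `a` to `b`
(toward the root `r`), i.e. `d(r,b) = d(r,a) - 1`. -/
def dagStep (G : SimpleGraph V) (r a b : V) : Prop :=
  G.Adj a b ∧ G.dist r a = G.dist r b + 1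

/-- Reachability by a directed path in the BFS DAG `G_r`. -/
def dagReach (G : SimpleGraph V) (r a b : V) : Prop :=
  Relation.ReflTransGen (dagStep G r) a b

/-- A finite set of vertices is an antichain with respect to the root `r`:
its vertices are pairwise unreachable in the BFS DAG `G_r`. -/
def IsAntichainSet (G : SimpleGraph V) (r : V) (A : Finset V) : Prop :=
  ∀ a ∈ A, ∀ b ∈ A, a ≠ b → ¬ dagReach G r a b ∧ ¬ dagReach G r b a

/-- A walk is an isometric path: a shortest path between its endpoints. -/
def IsIsometricPath (G : SimpleGraph V) {u v : V} (p : G.Walk u v) : Prop :=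
  p.IsPath ∧ p.length = G.dist u v

/-- The vertices of `p` can be covered by at most `k` many `r`-rooted isometric paths. -/
def CoveredBy (G : SimpleGraph V) (r : V) {x y : V} (p : G.Walk x y) (k : ℕ) : Prop :=
  ∃ s : Finset (Σ v : V, G.Walk r v), s.card ≤ k ∧
    (∀ q ∈ s, IsIsometricPath G q.2) ∧
    ∀ a ∈ p.support, ∃ q ∈ s, a ∈ q.2.support
lemma getVert_eq_support_getElem {G : SimpleGraph V} {u v : V} (p : G.Walk u v)
    {i : ℕ} (hi : i ≤ p.length) :
    p.getVert i = p.support[i]'(by simp [Walk.length_support]; omega) := by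
  induction p generalizing i with
  | nil =>
    obtain rfl : i = 0 := by simpa using hi
    simp
  | cons h q ih =>
    cases i with
    | zero => simp
    | succ n =>
      simp only [Walk.support_cons, Walk.getVert_cons_succ]
      rw [ih (by simpa using hi)]
      simp

lemma isPath_getVert_inj {G : SimpleGraph V} {u v : V} {p : G.Walk u v} (hp : p.IsPath)
    {i j : ℕ} (hi : i ≤ p.length) (hj : j ≤ p.length) (h : p.getVert i = p.getVert j) :
    i = j := by
  rw [getVert_eq_support_getElem p hi, getVert_eq_support_getElem p hj] at h
  have hn := hp.support_nodup
  exact (List.Nodup.getElem_inj_iff hn).mp h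

lemma reach_of_decr {G : SimpleGraph V} {x y r : V} (p : G.Walk x y) {i j : ℕ} (hij : i ≤ j)
    (hj : j ≤ p.length)
    (h : ∀ k, i ≤ k → k < j → G.dist r (p.getVert k) = G.dist r (p.getVert (k + 1)) + 1) :
    dagReach G r (p.getVert i) (p.getVert j) := by
  induction j, hij using Nat.le_induction with
  | base => exact Relation.ReflTransGen.refl
  | succ n hn ih =>
    exact (ih (by omega) (fun k hk1 hk2 => h k hk1 (by omega))).tail
      ⟨p.adj_getVert_succ (by omega), h n hn (by omega)⟩

lemma reach_of_incr {G : SimpleGraph V} {x y r : V} (p : G.Walk x y) {i j : ℕ} (hij : i ≤ j)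
    (hj : j ≤ p.length)
    (h : ∀ k, i ≤ k → k < j → G.dist r (p.getVert (k + 1)) = G.dist r (p.getVert k) + 1) :
    dagReach G r (p.getVert j) (p.getVert i) := by
  induction j, hij using Nat.le_induction with
  | base => exact Relation.ReflTransGen.refl
  | succ n hn ih =>
    exact Relation.ReflTransGen.head
      ⟨(p.adj_getVert_succ (by omega)).symm, h n hn (by omega)⟩
      (ih (by omega) (fun k hk1 hk2 => h k hk1 (by omega)))


/-- For a connected graph `G`, a root `r`, and an isometric path `p`
between `x` and `y`, the length of `p` is at least `|d(r,x) - d(r,y)| + |A| - 1`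
for every antichain `A` (w.r.t. `r`) among the vertices of `p`. -/
theorem statement0 (G : SimpleGraph V) (hG : G.Connected) (r x y : V)
    (p : G.Walk x y) (hp : IsIsometricPath G p)
    (A : Finset V) (hA : ∀ a ∈ A, a ∈ p.support)
    (hanti : IsAntichainSet G r A) :
    ((G.dist r x : ℤ) - (G.dist r y : ℤ)).natAbs + A.card ≤ p.length + 1 := by
  classical
  set L := p.length with hL
  set f : ℕ → ℤ := fun i => (G.dist r (p.getVert i) : ℤ) with hf
  -- one-step bound
  have hstep : ∀ i, i < L → f i ≤ f (i + 1) + 1 ∧ f (i + 1) ≤ f i + 1 := by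
    intro i hi
    have hadj := p.adj_getVert_succ hi
    have h1 : G.dist (p.getVert i) (p.getVert (i + 1)) = 1 := dist_eq_one_iff_adj.mpr hadj
    have h2 : G.dist (p.getVert (i + 1)) (p.getVert i) = 1 := dist_eq_one_iff_adj.mpr hadj.symm
    have t1 := hG.dist_triangle (u := r) (v := p.getVert (i+1)) (w := p.getVert i)
    have t2 := hG.dist_triangle (u := r) (v := p.getVert i) (w := p.getVert (i+1))
    rw [h2] at t1; rw [h1] at t2
    constructor <;> simp only [hf] <;> omega
  -- monotone functions
  set g : ℕ → ℤ := fun i => f i + i with hg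
  set h : ℕ → ℤ := fun i => (i : ℤ) - f i with hh
  have hgmono : ∀ i j, i ≤ j → j ≤ L → g i ≤ g j := by
    intro i j hij hj
    induction j, hij using Nat.le_induction with
    | base => exact le_rfl
    | succ n hn ih =>
      have := (hstep n (by omega)).1
      have := ih (by omega)
      simp only [hg] at *
      push_cast
      omega
  have hhmono : ∀ i j, i ≤ j → j ≤ L → h i ≤ h j := by
    intro i j hij hj
    induction j, hij using Nat.le_induction with
    | base => exact le_rfl
    | succ n hn ih =>
      have := (hstep n (by omega)).2
      have := ih (by omega)
      simp only [hh] at *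
      push_cast
      omega
  -- index map
  have hidx : ∀ a ∈ A, ∃ n, p.getVert n = a ∧ n ≤ L :=
    fun a ha => Walk.mem_support_iff_exists_getVert.mp (hA a ha)
  set idx : V → ℕ := fun a => if hm : a ∈ A then (hidx a hm).choose else 0 with hidxdef
  have hidx1 : ∀ a ∈ A, p.getVert (idx a) = a := by
    intro a ha; simp only [hidxdef, dif_pos ha]; exact (hidx a ha).choose_spec.1
  have hidx2 : ∀ a ∈ A, idx a ≤ L := by
    intro a ha; simp only [hidxdef, dif_pos ha]; exact (hidx a ha).choose_spec.2
  set B : Finset ℕ := A.image idx with hB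
  have hBcard : B.card = A.card := by
    apply Finset.card_image_of_injOn
    intro a ha b hb hab
    rw [← hidx1 a ha, ← hidx1 b hb, hab]
  have hBmem : ∀ n ∈ B, n ≤ L ∧ p.getVert n ∈ A := by
    intro n hn
    obtain ⟨a, ha, rfl⟩ := Finset.mem_image.mp hn
    exact ⟨hidx2 a ha, by rw [hidx1 a ha]; exact ha⟩
  -- distinctness of antichain vertices at distinct indices
  have hdist : ∀ m n, m ≤ L → n ≤ L → m ≠ n → p.getVert m ≠ p.getVert n := by
    intro m n hm hn hmn heq
    exact hmn (isPath_getVert_inj hp.1 hm hn heq)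
  -- strict monotonicity of g on B
  have hgstrict : ∀ m ∈ B, ∀ n ∈ B, m < n → g m < g n := by
    intro m hm n hn hmn
    by_contra hcon
    have hgeq : g m = g n := le_antisymm (hgmono m n (by omega) (hBmem n hn).1) (by omega)
    have hall : ∀ k, m ≤ k → k < n → G.dist r (p.getVert k) = G.dist r (p.getVert (k + 1)) + 1 := by
      intro k hk1 hk2
      have e1 : g m ≤ g k := hgmono m k hk1 (by have := (hBmem n hn).1; omega)
      have e2 : g k ≤ g (k + 1) := hgmono k (k + 1) (by omega) (by have := (hBmem n hn).1; omega)
      have e3 : g (k + 1) ≤ g n := hgmono (k + 1) n (by omega) (hBmem n hn).1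
      have hgk : g k = g (k + 1) := by omega
      simp only [hg, hf] at hgk
      push_cast at hgk
      omega
    have := reach_of_decr p (le_of_lt hmn) (hBmem n hn).1 hall
    exact (hanti _ (hBmem m hm).2 _ (hBmem n hn).2
      (hdist m n (hBmem m hm).1 (hBmem n hn).1 (by omega))).1 this
  have hhstrict : ∀ m ∈ B, ∀ n ∈ B, m < n → h m < h n := by
    intro m hm n hn hmn
    by_contra hcon
    have hgeq : h m = h n := le_antisymm (hhmono m n (by omega) (hBmem n hn).1) (by omega)
    have hall : ∀ k, m ≤ k → k < n → G.dist r (p.getVert (k + 1)) = G.dist r (p.getVert k) + 1 := by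
      intro k hk1 hk2
      have e1 : h m ≤ h k := hhmono m k hk1 (by have := (hBmem n hn).1; omega)
      have e2 : h k ≤ h (k + 1) := hhmono k (k + 1) (by omega) (by have := (hBmem n hn).1; omega)
      have e3 : h (k + 1) ≤ h n := hhmono (k + 1) n (by omega) (hBmem n hn).1
      have hgk : h k = h (k + 1) := by omega
      simp only [hh, hf] at hgk
      push_cast at hgk
      omega
    have := reach_of_incr p (le_of_lt hmn) (hBmem n hn).1 hall
    exact (hanti _ (hBmem m hm).2 _ (hBmem n hn).2
      (hdist m n (hBmem m hm).1 (hBmem n hn).1 (by omega))).2 this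
  -- cardinality bounds
  have cardbound : ∀ (F : ℕ → ℤ), (∀ i j, i ≤ j → j ≤ L → F i ≤ F j) →
      (∀ m ∈ B, ∀ n ∈ B, m < n → F m < F n) → A.card ≤ (F L + 1 - F 0).toNat := by
    intro F hmono hstrict
    rw [← hBcard]
    have hsub : B.image F ⊆ Finset.Icc (F 0) (F L) := by
      intro t ht
      obtain ⟨n, hn, rfl⟩ := Finset.mem_image.mp ht
      exact Finset.mem_Icc.mpr ⟨hmono 0 n (by omega) (hBmem n hn).1,
        hmono n L (hBmem n hn).1 le_rfl⟩
    have hinj : B.card = (B.image F).card := by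
      symm
      apply Finset.card_image_of_injOn
      intro a ha b hb hab
      rcases lt_trichotomy a b with hc | hc | hc
      · exact absurd hab (ne_of_lt (hstrict a ha b hb hc))
      · exact hc
      · exact absurd hab.symm (ne_of_lt (hstrict b hb a ha hc))
    calc B.card = (B.image F).card := hinj
      _ ≤ (Finset.Icc (F 0) (F L)).card := Finset.card_le_card hsub
      _ = (F L + 1 - F 0).toNat := Int.card_Icc _ _
  have c1 := cardbound g hgmono hgstrict
  have c2 := cardbound h hhmono hhstrict
  have hx0 : p.getVert 0 = x := p.getVert_zero
  have hyL : p.getVert L = y := p.getVert_length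
  have hg0 : g 0 = (G.dist r x : ℤ) := by simp [hg, hf, hx0]
  have hgL : g L = (G.dist r y : ℤ) + L := by simp [hg, hf, hyL]
  have hh0 : h 0 = -(G.dist r x : ℤ) := by simp [hh, hf, hx0]
  have hhL : h L = (L : ℤ) - (G.dist r y : ℤ) := by simp [hh, hf, hyL]
  rw [hg0, hgL] at c1
  rw [hh0, hhL] at c2
  have m1 := hgmono 0 L (by omega) le_rfl
  have m2 := hhmono 0 L (by omega) le_rfl
  rw [hg0, hgL] at m1
  rw [hh0, hhL] at m2
  set d1 := G.dist r x
  set d2 := G.dist r y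
  omega
end

section
/- For any connected graph G and any vertex r, the minimum integer k such that every isometric path of G can be covered by k many r-rooted isometric paths equals the maximum, over all isometric paths P of G, of the size of a maximum antichain (with respect to r) among the vertices of P. -/
open SimpleGraph

variable {V : Type*}

section Dilworth

variable (R : V → V → Prop)

/-- A finset is a chain for `R`: all pairs comparable. -/
def ChainF (C : Finset V) : Prop := ∀ a ∈ C, ∀ b ∈ C, R a b ∨ R b a

/-- A finset is an antichain for `R`. -/
def ACF (A : Finset V) : Prop := ∀ a ∈ A, ∀ b ∈ A, a ≠ b → ¬ R a b ∧ ¬ R b a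

variable {R}

/-- Any antichain is at most as large as any chain cover. -/
lemma ac_card_le_cover {S : Finset V} {𝒞 : Finset (Finset V)}
    (hch : ∀ C ∈ 𝒞, ChainF R C) (hcov : ∀ v ∈ S, ∃ C ∈ 𝒞, v ∈ C)
    {B : Finset V} (hBS : B ⊆ S) (hB : ACF R B) : B.card ≤ 𝒞.card := by
  classical
  have hex : ∀ b ∈ B, ∃ C ∈ 𝒞, b ∈ C := fun b hb => hcov b (hBS hb)
  set f : V → Finset V := fun b =>
    if h : ∃ C ∈ 𝒞, b ∈ C then h.choose else ∅ with hf
  have hmem : ∀ b ∈ B, f b ∈ 𝒞 ∧ b ∈ f b := by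
    intro b hb
    have h := hex b hb
    simp only [hf, dif_pos h]
    exact ⟨h.choose_spec.1, h.choose_spec.2⟩
  refine Finset.card_le_card_of_injOn f (fun b hb => (hmem b hb).1) ?_
  intro a ha b hb hab
  by_contra hne
  have hc := hch (f a) (hmem a ha).1 a (hmem a ha).2 b (hab ▸ (hmem b hb).2)
  rcases hc with h | h
  · exact ((hB a ha b hb hne).1 h).elim
  · exact ((hB a ha b hb hne).2 h).elim

/-- If an antichain in `S` has the same size as a chain cover, it meets every chain. -/
lemma ac_meets_chains {S : Finset V} {𝒞 : Finset (Finset V)}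
    (hch : ∀ C ∈ 𝒞, ChainF R C) (hcov : ∀ v ∈ S, ∃ C ∈ 𝒞, v ∈ C)
    {B : Finset V} (hBS : B ⊆ S) (hB : ACF R B) (hcard : B.card = 𝒞.card) :
    ∀ C ∈ 𝒞, ∃ b ∈ B, b ∈ C := by
  classical
  have hex : ∀ b ∈ B, ∃ C ∈ 𝒞, b ∈ C := fun b hb => hcov b (hBS hb)
  set f : V → Finset V := fun b =>
    if h : ∃ C ∈ 𝒞, b ∈ C then h.choose else ∅ with hf
  have hmem : ∀ b ∈ B, f b ∈ 𝒞 ∧ b ∈ f b := by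
    intro b hb
    have h := hex b hb
    simp only [hf, dif_pos h]
    exact ⟨h.choose_spec.1, h.choose_spec.2⟩
  have hinj : Set.InjOn f B := by
    intro a ha b hb hab
    by_contra hne
    have hc := hch (f a) (hmem a ha).1 a (hmem a ha).2 b (hab ▸ (hmem b hb).2)
    rcases hc with h | h
    · exact ((hB a ha b hb hne).1 h).elim
    · exact ((hB a ha b hb hne).2 h).elim
  have himg : B.image f = 𝒞 := by
    apply Finset.eq_of_subset_of_card_le
    · intro C hC
      obtain ⟨b, hb, rfl⟩ := Finset.mem_image.mp hC
      exact (hmem b hb).1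
    · rw [Finset.card_image_of_injOn hinj, hcard]
  intro C hC
  rw [← himg] at hC
  obtain ⟨b, hb, rfl⟩ := Finset.mem_image.mp hC
  exact ⟨b, hb, (hmem b hb).2⟩

/-- Dilworth's theorem (Galvin's inductive proof), for a reflexive transitive
relation with a strictly decreasing height function. -/
theorem dilworth (h : V → ℕ)
    (hrefl : ∀ a, R a a) (htrans : ∀ {a b c}, R a b → R b c → R a c)
    (hht : ∀ {a b}, R a b → a ≠ b → h b < h a) :
    ∀ S : Finset V,
    ∃ 𝒞 : Finset (Finset V), (∀ C ∈ 𝒞, C.Nonempty ∧ C ⊆ S ∧ ChainF R C) ∧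
      (∀ C ∈ 𝒞, ∀ D ∈ 𝒞, C ≠ D → Disjoint C D) ∧
      (∀ v ∈ S, ∃ C ∈ 𝒞, v ∈ C) ∧
      ∃ A : Finset V, A ⊆ S ∧ ACF R A ∧ 𝒞.card ≤ A.card := by
  classical
  intro S
  induction S using Finset.strongInduction with
  | _ S IH =>
  rcases S.eq_empty_or_nonempty with rfl | hSne
  · exact ⟨∅, by simp, by simp, by simp, ∅, by simp [ACF]⟩
  -- pick a maximal element (max height)
  obtain ⟨a, haS, hamax⟩ := Finset.exists_max_image S h hSne
  have hamax' : ∀ y ∈ S, R y a → y = a := by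
    intro y hy hya
    by_contra hne
    exact absurd (hamax y hy) (not_le.mpr (hht hya hne))
  set S' := S.erase a with hS'def
  have haS' : a ∉ S' := Finset.notMem_erase a S
  have hS'sub : S' ⊆ S := Finset.erase_subset a S
  obtain ⟨𝒞', h𝒞', hdisj', hcov', A', hA'S, hA'ac, hcard'⟩ :=
    IH S' (Finset.erase_ssubset haS)
  set k := 𝒞'.card with hkdef
  have hchains : ∀ C ∈ 𝒞', ChainF R C := fun C hC => (h𝒞' C hC).2.2
  have hacbound : ∀ B ⊆ S', ACF R B → B.card ≤ k := fun B hBS hB =>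
    ac_card_le_cover hchains hcov' hBS hB
  have hA'k : A'.card = k := le_antisymm (hacbound A' hA'S hA'ac) hcard'
  by_cases hk0 : k = 0
  · -- then S' is empty and S = {a}
    have h𝒞'e : 𝒞' = ∅ := Finset.card_eq_zero.mp (hkdef ▸ hk0)
    refine ⟨{{a}}, ?_, ?_, ?_, {a}, ?_, ?_, ?_⟩
    · intro C hC
      simp only [Finset.mem_singleton] at hC
      subst hC
      exact ⟨Finset.singleton_nonempty a, Finset.singleton_subset_iff.mpr haS,
        fun x hx y hy => by
          simp only [Finset.mem_singleton] at hx hy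
          rw [hx, hy]
          exact Or.inl (hrefl a)⟩
    · intro C hC D hD hne
      simp only [Finset.mem_singleton] at hC hD
      exact absurd (hC.trans hD.symm) hne
    · intro v hv
      refine ⟨{a}, Finset.mem_singleton_self _, ?_⟩
      by_contra hva
      simp only [Finset.mem_singleton] at hva
      have hvS' : v ∈ S' := Finset.mem_erase.mpr ⟨hva, hv⟩
      obtain ⟨C, hC, -⟩ := hcov' v hvS'
      simp [h𝒞'e] at hC
    · exact Finset.singleton_subset_iff.mpr haS
    · intro x hx y hy hxy
      simp only [Finset.mem_singleton] at hx hy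
      exact absurd (hx.trans hy.symm) hxy
    · simp
  -- k ≥ 1. Define, for each chain, its topmost element lying in a k-antichain.
  have hone : 1 ≤ k := Nat.one_le_iff_ne_zero.mpr hk0
  set P : V → Prop := fun z => ∃ B : Finset V, B ⊆ S' ∧ ACF R B ∧ B.card = k ∧ z ∈ B
    with hPdef
  have hmeets : ∀ B ⊆ S', ACF R B → B.card = k → ∀ C ∈ 𝒞', ∃ b ∈ B, b ∈ C :=
    fun B hBS hB hBk => ac_meets_chains hchains hcov' hBS hB hBk
  have hACne : ∀ C ∈ 𝒞', ∃ z, (z ∈ C.filter P) ∧ ∀ w ∈ C.filter P, h w ≤ h z := by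
    intro C hC
    obtain ⟨b, hbA, hbC⟩ := hmeets A' hA'S hA'ac hA'k C hC
    have hne : (C.filter P).Nonempty :=
      ⟨b, Finset.mem_filter.mpr ⟨hbC, A', hA'S, hA'ac, hA'k, hbA⟩⟩
    exact Finset.exists_max_image _ h hne
  have _inst : Nonempty V := ⟨a⟩
  choose! xx hx1 hx2 using hACne
  have hxxC : ∀ C ∈ 𝒞', xx C ∈ C := fun C hC => (Finset.mem_filter.mp (hx1 C hC)).1
  have hxxP : ∀ C ∈ 𝒞', P (xx C) := fun C hC => (Finset.mem_filter.mp (hx1 C hC)).2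
  have hxgreat : ∀ C ∈ 𝒞', ∀ w ∈ C.filter P, R (xx C) w := by
    intro C hC w hw
    rcases hchains C hC (xx C) (hxxC C hC) w (Finset.mem_filter.mp hw).1 with hr | hr
    · exact hr
    · by_cases hwx : w = xx C
      · exact hwx ▸ hrefl w
      · exact absurd (hx2 C hC w hw) (not_le.mpr (hht hr hwx))
  set X := 𝒞'.image xx with hXdef
  have hXinj : Set.InjOn xx 𝒞' := by
    intro C hC D hD he
    by_contra hne
    exact Finset.disjoint_left.mp (hdisj' C hC D hD hne) (hxxC C hC) (he ▸ hxxC D hD)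
  have hXcard : X.card = k := by rw [hXdef, Finset.card_image_of_injOn hXinj]
  have hXS' : X ⊆ S' := by
    intro x hx
    obtain ⟨C, hC, rfl⟩ := Finset.mem_image.mp hx
    exact (h𝒞' C hC).2.1 (hxxC C hC)
  have hXone : ∀ C ∈ 𝒞', ∀ D ∈ 𝒞', xx C ≠ xx D → ¬ R (xx C) (xx D) := by
    intro C hC D hD hne hR
    obtain ⟨B, hBS, hBac, hBk, hxB⟩ := hxxP C hC
    obtain ⟨y, hyB, hyD⟩ := hmeets B hBS hBac hBk D hD
    have hyP : y ∈ D.filter P := Finset.mem_filter.mpr ⟨hyD, B, hBS, hBac, hBk, hyB⟩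
    have hRy : R (xx C) y := htrans hR (hxgreat D hD y hyP)
    by_cases hxy : xx C = y
    · -- then R (xx D) (xx C) and R (xx C) (xx D) force equality
      have h1 : R (xx D) (xx C) := hxy ▸ hxgreat D hD y hyP
      exact absurd (hht hR hne) (not_lt.mpr (le_of_lt (hht h1 (Ne.symm hne))))
    · exact (hBac (xx C) hxB y hyB hxy).1 hRy
  have hXac : ACF R X := by
    intro u hu v hv huv
    obtain ⟨C, hC, rfl⟩ := Finset.mem_image.mp hu
    obtain ⟨D, hD, rfl⟩ := Finset.mem_image.mp hv
    exact ⟨hXone C hC D hD huv, hXone D hD C hC (Ne.symm huv)⟩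
  by_cases hcase : ∀ C ∈ 𝒞', ¬ R a (xx C)
  · -- a is incomparable with all of X : width is k+1
    have haX : a ∉ X := fun h => haS' (hXS' h)
    refine ⟨insert {a} 𝒞', ?_, ?_, ?_, insert a X, ?_, ?_, ?_⟩
    · intro C hC
      rcases Finset.mem_insert.mp hC with rfl | hC
      · exact ⟨Finset.singleton_nonempty a, Finset.singleton_subset_iff.mpr haS,
          fun x hx y hy => by
            simp only [Finset.mem_singleton] at hx hy
            rw [hx, hy]
            exact Or.inl (hrefl a)⟩
      · exact ⟨(h𝒞' C hC).1, ((h𝒞' C hC).2.1).trans hS'sub, (h𝒞' C hC).2.2⟩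
    · intro C hC D hD hne
      rcases Finset.mem_insert.mp hC with rfl | hC <;>
        rcases Finset.mem_insert.mp hD with rfl | hD
      · exact absurd rfl hne
      · exact Finset.disjoint_singleton_left.mpr (fun h => haS' ((h𝒞' D hD).2.1 h))
      · exact (Finset.disjoint_singleton_left.mpr
          (fun h => haS' ((h𝒞' C hC).2.1 h))).symm
      · exact hdisj' C hC D hD hne
    · intro v hv
      by_cases hva : v = a
      · exact ⟨{a}, Finset.mem_insert_self _ _, by simp [hva]⟩
      · obtain ⟨C, hC, hvC⟩ := hcov' v (Finset.mem_erase.mpr ⟨hva, hv⟩)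
        exact ⟨C, Finset.mem_insert_of_mem hC, hvC⟩
    · exact Finset.insert_subset haS (hXS'.trans hS'sub)
    · have key : ∀ u ∈ insert a X, ∀ v ∈ insert a X, u ≠ v → ¬ R u v := by
        intro u hu v hv huv hR
        rcases Finset.mem_insert.mp hu with h1 | h1 <;>
          rcases Finset.mem_insert.mp hv with h2 | h2
        · exact huv (h1.trans h2.symm)
        · obtain ⟨C, hC, hCe⟩ := Finset.mem_image.mp h2
          exact hcase C hC (by rwa [hCe, ← h1])
        · have : u = a := hamax' u (hS'sub (hXS' h1)) (h2 ▸ hR)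
          exact (fun h => haS' (hXS' h)) (this ▸ h1)
        · exact (hXac u h1 v h2 huv).1 hR
      exact fun u hu v hv huv => ⟨key u hu v hv huv, key v hv u hu (Ne.symm huv)⟩
    · calc (insert {a} 𝒞').card ≤ 𝒞'.card + 1 := Finset.card_insert_le _ _
        _ = (insert a X).card := by rw [Finset.card_insert_of_notMem haX, hXcard]
  · -- a lies above some xx C₀ : remove the chain K below xx C₀ together with a
    push_neg at hcase
    obtain ⟨C₀, hC₀, hRa⟩ := hcase
    set K : Finset V := insert a (C₀.filter (fun z => R (xx C₀) z)) with hKdef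
    have hKS : K ⊆ S := by
      refine Finset.insert_subset haS ?_
      intro z hz
      exact hS'sub ((h𝒞' C₀ hC₀).2.1 (Finset.mem_filter.mp hz).1)
    have haK : a ∈ K := Finset.mem_insert_self _ _
    have hKchain : ChainF R K := by
      intro u hu v hv
      rcases Finset.mem_insert.mp hu with h1 | h1 <;>
        rcases Finset.mem_insert.mp hv with h2 | h2
      · exact Or.inl (h1 ▸ h2 ▸ hrefl a)
      · exact Or.inl (h1 ▸ htrans hRa (Finset.mem_filter.mp h2).2)
      · exact Or.inr (h2 ▸ htrans hRa (Finset.mem_filter.mp h1).2)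
      · exact hchains C₀ hC₀ u (Finset.mem_filter.mp h1).1 v (Finset.mem_filter.mp h2).1
    obtain ⟨𝒟, h𝒟, hdisj𝒟, hcov𝒟, B', hB'S, hB'ac, hcard𝒟⟩ :=
      IH (S \ K) (Finset.sdiff_ssubset hKS ⟨a, haK⟩)
    have hB'k : B'.card < k := by
      have hB'S' : B' ⊆ S' := by
        intro b hb
        have hbS := hB'S hb
        refine Finset.mem_erase.mpr ⟨?_, (Finset.mem_sdiff.mp hbS).1⟩
        rintro rfl
        exact (Finset.mem_sdiff.mp hbS).2 haK
      rcases lt_or_eq_of_le (hacbound B' hB'S' hB'ac) with h | h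
      · exact h
      · exfalso
        obtain ⟨y, hyB, hyC₀⟩ := hmeets B' hB'S' hB'ac h C₀ hC₀
        have hyP : y ∈ C₀.filter P := by
          refine Finset.mem_filter.mpr ⟨hyC₀, B', hB'S', hB'ac, h, hyB⟩
        have hyK : y ∈ K := Finset.mem_insert_of_mem
          (Finset.mem_filter.mpr ⟨hyC₀, hxgreat C₀ hC₀ y hyP⟩)
        exact (Finset.mem_sdiff.mp (hB'S hyB)).2 hyK
    refine ⟨insert K 𝒟, ?_, ?_, ?_, X, hXS'.trans hS'sub, hXac, ?_⟩
    · intro C hC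
      rcases Finset.mem_insert.mp hC with rfl | hC
      · exact ⟨⟨a, haK⟩, hKS, hKchain⟩
      · exact ⟨(h𝒟 C hC).1, ((h𝒟 C hC).2.1).trans (Finset.sdiff_subset), (h𝒟 C hC).2.2⟩
    · intro C hC D hD hne
      have hdisjK : ∀ D ∈ 𝒟, Disjoint K D := by
        intro D hD
        exact Finset.disjoint_right.mpr
          (fun {x} hx hxK => (Finset.mem_sdiff.mp ((h𝒟 D hD).2.1 hx)).2 hxK)
      rcases Finset.mem_insert.mp hC with rfl | hC <;>
        rcases Finset.mem_insert.mp hD with rfl | hD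
      · exact absurd rfl hne
      · exact hdisjK D hD
      · exact (hdisjK C hC).symm
      · exact hdisj𝒟 C hC D hD hne
    · intro v hv
      by_cases hvK : v ∈ K
      · exact ⟨K, Finset.mem_insert_self _ _, hvK⟩
      · obtain ⟨C, hC, hvC⟩ := hcov𝒟 v (Finset.mem_sdiff.mpr ⟨hv, hvK⟩)
        exact ⟨C, Finset.mem_insert_of_mem hC, hvC⟩
    · calc (insert K 𝒟).card ≤ 𝒟.card + 1 := Finset.card_insert_le _ _
        _ ≤ B'.card + 1 := by omega
        _ ≤ k := hB'k
        _ = X.card := hXcard.symm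

end Dilworth

section GraphLemmas

variable {G : SimpleGraph V} {r : V}

lemma dagReach_dist_le {a b : V} (h : dagReach G r a b) : G.dist r b ≤ G.dist r a := by
  induction h with
  | refl => exact le_refl _
  | tail _ step ih =>
    have := step.2
    omega

lemma dagReach_dist_lt {a b : V} (h : dagReach G r a b) (hne : a ≠ b) :
    G.dist r b < G.dist r a := by
  rcases (Relation.ReflTransGen.cases_tail h) with h | ⟨c, hac, hstep⟩
  · exact absurd h.symm hne
  · have h1 := dagReach_dist_le hac
    have h2 := hstep.2
    omega

/-- Every edge of the walk is a step of the BFS DAG (descending towards `r`). -/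
def Desc (G : SimpleGraph V) (r : V) : ∀ {a b : V}, G.Walk a b → Prop
  | _, _, Walk.nil => True
  | _, _, @Walk.cons _ _ a c _ _ p => dagStep G r a c ∧ Desc G r p

@[simp] lemma desc_nil {a : V} : Desc G r (Walk.nil : G.Walk a a) := trivial

@[simp] lemma desc_cons_iff {a c b : V} (h : G.Adj a c) (p : G.Walk c b) :
    Desc G r (Walk.cons h p) ↔ dagStep G r a c ∧ Desc G r p := Iff.rfl

lemma Desc.length_add {a b : V} {w : G.Walk a b} (hw : Desc G r w) :
    w.length + G.dist r b = G.dist r a := by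
  induction w with
  | nil => simp
  | cons h p ih =>
    obtain ⟨hs, hd⟩ := hw
    have := ih hd
    have := hs.2
    simp only [Walk.length_cons]
    omega

lemma Desc.dist_le_of_mem {a b : V} {w : G.Walk a b} (hw : Desc G r w) :
    ∀ c ∈ w.support, G.dist r c ≤ G.dist r a := by
  induction w with
  | nil =>
    intro c hc; simp only [Walk.support_nil, List.mem_singleton] at hc
    exact hc ▸ le_refl _
  | cons h p ih =>
    obtain ⟨hs, hd⟩ := hw
    intro c hc
    rw [Walk.support_cons, List.mem_cons] at hc
    rcases hc with rfl | hc
    · exact le_refl _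
    · have := ih hd c hc
      have := hs.2
      omega

lemma Desc.reach_of_mem {a b : V} {w : G.Walk a b} (hw : Desc G r w) :
    ∀ c ∈ w.support, dagReach G r a c := by
  induction w with
  | nil =>
    intro c hc; simp only [Walk.support_nil, List.mem_singleton] at hc
    exact hc ▸ Relation.ReflTransGen.refl
  | cons h p ih =>
    obtain ⟨hs, hd⟩ := hw
    intro c hc
    rw [Walk.support_cons, List.mem_cons] at hc
    rcases hc with rfl | hc
    · exact Relation.ReflTransGen.refl
    · exact Relation.ReflTransGen.head hs (ih hd c hc)

lemma Desc.comparable {a b : V} {w : G.Walk a b} (hw : Desc G r w) :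
    ∀ u ∈ w.support, ∀ v ∈ w.support, dagReach G r u v ∨ dagReach G r v u := by
  induction w with
  | nil =>
    intro u hu v hv
    simp only [Walk.support_nil, List.mem_singleton] at hu hv
    exact Or.inl (hu ▸ hv ▸ Relation.ReflTransGen.refl)
  | cons h p ih =>
    obtain ⟨hs, hd⟩ := hw
    intro u hu v hv
    rw [Walk.support_cons, List.mem_cons] at hu hv
    rcases hu with rfl | hu
    · rcases hv with rfl | hv
      · exact Or.inl Relation.ReflTransGen.refl
      · exact Or.inl (Relation.ReflTransGen.head hs (hd.reach_of_mem v hv))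
    · rcases hv with rfl | hv
      · exact Or.inr (Relation.ReflTransGen.head hs (hd.reach_of_mem u hu))
      · exact ih hd u hu v hv

lemma Desc.support_nodup {a b : V} {w : G.Walk a b} (hw : Desc G r w) :
    w.support.Nodup := by
  induction w with
  | nil => simp
  | cons h p ih =>
    obtain ⟨hs, hd⟩ := hw
    rw [Walk.support_cons, List.nodup_cons]
    refine ⟨fun hmem => ?_, ih hd⟩
    have h1 := hd.dist_le_of_mem _ hmem
    have h2 := hs.2
    omega

lemma Desc.append {a b c : V} {w : G.Walk a b} {w' : G.Walk b c}
    (hw : Desc G r w) (hw' : Desc G r w') : Desc G r (w.append w') := by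
  induction w with
  | nil => simpa using hw'
  | cons h p ih =>
    obtain ⟨hs, hd⟩ := hw
    exact ⟨hs, ih hd hw'⟩

lemma dagReach.exists_desc_walk {a b : V} (h : dagReach G r a b) :
    ∃ w : G.Walk a b, Desc G r w := by
  induction h using Relation.ReflTransGen.head_induction_on with
  | refl => exact ⟨Walk.nil, trivial⟩
  | head step _ ih =>
    obtain ⟨w, hw⟩ := ih
    exact ⟨Walk.cons step.1 w, step, hw⟩

lemma desc_of_length_eq (hG : G.Connected) {a : V} (w : G.Walk a r)
    (hw : w.length = G.dist r a) : Desc G r w := by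
  induction w with
  | nil => trivial
  | cons h p ih =>
    rename_i u c rt
    have h1 : G.dist rt c ≤ p.length := by
      have := SimpleGraph.dist_le p
      rwa [SimpleGraph.dist_comm] at this
    have h2 : G.dist rt u ≤ G.dist rt c + 1 := by
      obtain ⟨q, hq⟩ := hG.exists_walk_length_eq_dist rt c
      have := SimpleGraph.dist_le (q.concat h.symm)
      rwa [Walk.length_concat, hq] at this
    rw [Walk.length_cons] at hw
    have h3 : G.dist rt c = p.length := by omega
    exact ⟨⟨h, by omega⟩, ih h3.symm⟩

lemma exists_desc_to_root (hG : G.Connected) (a : V) :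
    ∃ w : G.Walk a r, Desc G r w := by
  obtain ⟨p, hp⟩ := hG.exists_walk_length_eq_dist a r
  exact ⟨p, desc_of_length_eq hG p (by rwa [SimpleGraph.dist_comm] at hp)⟩

lemma Desc.isometric_reverse {a : V} {w : G.Walk a r} (hw : Desc G r w) :
    IsIsometricPath G w.reverse := by
  constructor
  · rw [Walk.isPath_def, Walk.support_reverse]
    exact List.nodup_reverse.mpr hw.support_nodup
  · rw [Walk.length_reverse]
    have h1 := hw.length_add
    have h2 : G.dist r r = 0 := SimpleGraph.dist_self
    omega

end GraphLemmas


lemma chain_to_walk {G : SimpleGraph V} {r : V} (hG : G.Connected) :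
    ∀ C : Finset V, C.Nonempty → ChainF (dagReach G r) C →
    ∃ t ∈ C, ∃ w : G.Walk t r, Desc G r w ∧ ∀ c ∈ C, c ∈ w.support := by
  classical
  intro C
  induction C using Finset.strongInduction with
  | _ C IH =>
    intro hCne hCch
    obtain ⟨t, htC, htmax⟩ := Finset.exists_max_image C (G.dist r) hCne
    have htop : ∀ c ∈ C, dagReach G r t c := by
      intro c hc
      rcases hCch t htC c hc with h | h
      · exact h
      · by_cases hct : c = t
        · exact hct ▸ Relation.ReflTransGen.refl
        · exact absurd (htmax c hc) (not_le.mpr (dagReach_dist_lt h hct))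
    rcases (C.erase t).eq_empty_or_nonempty with he | hne
    · obtain ⟨w, hw⟩ := exists_desc_to_root hG t
      refine ⟨t, htC, w, hw, fun c hc => ?_⟩
      have hct : c = t := by
        by_contra hct
        exact (Finset.notMem_empty c) (he ▸ Finset.mem_erase.mpr ⟨hct, hc⟩)
      exact hct ▸ w.start_mem_support
    · obtain ⟨t', ht'C, w', hw', hcovw⟩ := IH (C.erase t) (Finset.erase_ssubset htC) hne
        (fun a ha b hb => hCch a (Finset.erase_subset t C ha) b (Finset.erase_subset t C hb))
      obtain ⟨u, hu⟩ := dagReach.exists_desc_walk (htop t' (Finset.erase_subset t C ht'C))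
      refine ⟨t, htC, u.append w', hu.append hw', fun c hc => ?_⟩
      rw [Walk.mem_support_append_iff]
      by_cases hct : c = t
      · exact Or.inl (hct ▸ u.start_mem_support)
      · exact Or.inr (hcovw c (Finset.mem_erase.mpr ⟨hct, hc⟩))

lemma isometric_root_comparable {G : SimpleGraph V} {r : V} (hG : G.Connected) {v : V}
    {q : G.Walk r v} (hq : IsIsometricPath G q) :
    ∀ a ∈ q.support, ∀ b ∈ q.support, dagReach G r a b ∨ dagReach G r b a := by
  have hd : Desc G r q.reverse := desc_of_length_eq hG q.reverse
    (by rw [SimpleGraph.Walk.length_reverse]; exact hq.2)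
  intro a ha b hb
  have ha' : a ∈ q.reverse.support := by
    rw [SimpleGraph.Walk.support_reverse]; exact List.mem_reverse.mpr ha
  have hb' : b ∈ q.reverse.support := by
    rw [SimpleGraph.Walk.support_reverse]; exact List.mem_reverse.mpr hb
  exact hd.comparable a ha' b hb'


/-- For a connected graph `G` and a vertex `r`, the minimum `k` such
that every isometric path of `G` can be covered by `k` many `r`-rooted isometric
paths equals the maximum, over isometric paths `P`, of the size of a maximum
antichain (w.r.t. `r`) among the vertices of `P`. -/
theorem statement1 [Fintype V] (G : SimpleGraph V) (hG : G.Connected) (r : V) :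
    sInf {k : ℕ | ∀ (x y : V) (p : G.Walk x y), IsIsometricPath G p → CoveredBy G r p k}
      = sSup {m : ℕ | ∃ (x y : V) (p : G.Walk x y), IsIsometricPath G p ∧
          ∃ A : Finset V, (∀ a ∈ A, a ∈ p.support) ∧ IsAntichainSet G r A ∧ A.card = m} := by
  classical
  have hMbdd : BddAbove {m : ℕ | ∃ (x y : V) (p : G.Walk x y), IsIsometricPath G p ∧
      ∃ A : Finset V, (∀ a ∈ A, a ∈ p.support) ∧ IsAntichainSet G r A ∧ A.card = m} := by
    refine ⟨Fintype.card V, fun m hm => ?_⟩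
    obtain ⟨x, y, p, hp, A, hA, hac, rfl⟩ := hm
    exact le_trans (Finset.card_le_univ A) (le_of_eq Finset.card_univ)
  have hMne : Set.Nonempty {m : ℕ | ∃ (x y : V) (p : G.Walk x y), IsIsometricPath G p ∧
      ∃ A : Finset V, (∀ a ∈ A, a ∈ p.support) ∧ IsAntichainSet G r A ∧ A.card = m} := by
    refine ⟨0, r, r, Walk.nil, ⟨Walk.IsPath.nil, by rw [SimpleGraph.dist_self, Walk.length_nil]⟩, ∅, by simp, ?_, rfl⟩
    intro a ha
    simp at ha
  have hroot : ∀ a : V, ∃ q : G.Walk r a, IsIsometricPath G q := by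
    intro a
    obtain ⟨w, hw⟩ := exists_desc_to_root (r := r) hG a
    exact ⟨w.reverse, hw.isometric_reverse⟩
  choose f hf using hroot
  have hKmem : (Fintype.card V) ∈ {k : ℕ | ∀ (x y : V) (p : G.Walk x y),
      IsIsometricPath G p → CoveredBy G r p k} := by
    intro x y p hp
    refine ⟨p.support.toFinset.image (fun a => ⟨a, f a⟩), ?_, ?_, ?_⟩
    · exact le_trans Finset.card_image_le
        (le_trans (Finset.card_le_univ _) (le_of_eq Finset.card_univ))
    · intro q hq
      obtain ⟨a, ha, rfl⟩ := Finset.mem_image.mp hq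
      exact hf a
    · intro a ha
      exact ⟨⟨a, f a⟩, Finset.mem_image_of_mem _ (List.mem_toFinset.mpr ha),
        (f a).end_mem_support⟩
  have hKne : Set.Nonempty {k : ℕ | ∀ (x y : V) (p : G.Walk x y),
      IsIsometricPath G p → CoveredBy G r p k} := ⟨_, hKmem⟩
  refine le_antisymm ?_ ?_
  · -- sInf ≤ sSup : the supremum is a valid covering number
    refine Nat.sInf_le ?_
    intro x y p hp
    obtain ⟨𝒞, h𝒞, hdisj, hcov, A, hAS, hAac, hcard⟩ :=
      dilworth (R := dagReach G r) (G.dist r)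
        (fun a => Relation.ReflTransGen.refl)
        (fun hab hbc => hab.trans hbc)
        (fun hab hne => dagReach_dist_lt hab hne)
        p.support.toFinset
    have hAm : A.card ∈ {m : ℕ | ∃ (x y : V) (p : G.Walk x y), IsIsometricPath G p ∧
        ∃ B : Finset V, (∀ a ∈ B, a ∈ p.support) ∧ IsAntichainSet G r B ∧ B.card = m} :=
      ⟨x, y, p, hp, A, fun a ha => List.mem_toFinset.mp (hAS ha), hAac, rfl⟩
    have hA_le := le_csSup hMbdd hAm
    have hCq : ∀ C ∈ 𝒞, ∃ q : (Σ v : V, G.Walk r v),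
        IsIsometricPath G q.2 ∧ ∀ c ∈ C, c ∈ q.2.support := by
      intro C hC
      obtain ⟨hne, hsub, hch⟩ := h𝒞 C hC
      obtain ⟨t, htC, w, hw, hcovw⟩ := chain_to_walk hG C hne hch
      refine ⟨⟨t, w.reverse⟩, hw.isometric_reverse, fun c hc => ?_⟩
      rw [Walk.support_reverse]
      exact List.mem_reverse.mpr (hcovw c hc)
    have hnein : Nonempty (Σ v : V, G.Walk r v) := ⟨⟨r, Walk.nil⟩⟩
    choose! g hg1 hg2 using hCq
    refine ⟨𝒞.image g, ?_, ?_, ?_⟩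
    · exact le_trans Finset.card_image_le (le_trans hcard hA_le)
    · intro q hq
      obtain ⟨C, hC, rfl⟩ := Finset.mem_image.mp hq
      exact hg1 C hC
    · intro a ha
      obtain ⟨C, hC, haC⟩ := hcov a (List.mem_toFinset.mpr ha)
      exact ⟨g C, Finset.mem_image_of_mem g hC, hg2 C hC a haC⟩
  · -- sSup ≤ sInf : every antichain size is at most every covering number
    refine csSup_le hMne ?_
    intro m hm
    refine le_csInf hKne ?_
    intro k hk
    obtain ⟨x, y, p, hp, A, hAp, hac, rfl⟩ := hm
    obtain ⟨s, hs, hiso, hcovs⟩ := hk x y p hp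
    refine le_trans ?_ hs
    have hnein : Nonempty (Σ v : V, G.Walk r v) := ⟨⟨r, Walk.nil⟩⟩
    have hex : ∀ a ∈ A, ∃ q : (Σ v : V, G.Walk r v), q ∈ s ∧ a ∈ q.2.support := by
      intro a ha
      obtain ⟨q, hq1, hq2⟩ := hcovs a (hAp a ha)
      exact ⟨q, hq1, hq2⟩
    choose! g hg1 hg2 using hex
    refine Finset.card_le_card_of_injOn g (fun a ha => hg1 a ha) ?_
    intro a ha b hb hab
    by_contra hne
    have h1 := hg2 a ha
    have h2 := hab ▸ hg2 b hb
    have hcomp := isometric_root_comparable hG (hiso _ (hg1 a ha)) a h1 b h2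
    rcases hcomp with h | h
    · exact (hac a ha b hb hne).1 h
    · exact (hac a ha b hb hne).2 h
end

section
/- Let G be a connected δ-hyperbolic graph (in the four-point condition sense). Then the isometric path complexity of G is at most 4δ + 3; more precisely, for every vertex r and every isometric path P of G, every antichain (with respect to r) among the vertices of P has size at most 4δ + 3. -/
open SimpleGraph

variable {V : Type*}

/-- The four-point condition: for any four vertices, the two larger of the three
distance sums differ by at most `2δ`. -/
def FourPointHyp (G : SimpleGraph V) (δ : ℝ) : Prop :=
  ∀ u v x y : V, ((G.dist u v : ℝ) + (G.dist x y : ℝ)) ≤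
    max ((G.dist u x : ℝ) + (G.dist v y : ℝ)) ((G.dist u y : ℝ) + (G.dist v x : ℝ)) + 2 * δ

/-!
Order the vertices of `A` by their position `d(x, ·)` on the isometric path `p`. Two antichain
vertices `a, b` satisfy `|d(r, a) - d(r, b)| < d(a, b)`, so along `p` the quantity
`d(r, ·) + d(x, ·)` strictly increases on `A` while `d(r, ·) - d(x, ·)` strictly decreases. Let `a`
and `c` be the first and last vertex of `A`. For every `b ∈ A`, the four-point condition for
`r, b, a, c` bounds by `2δ` either the increase of the first quantity from `a` to `b` or the
decrease of the second from `b` to `c`. Each of these two alternatives holds for at most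
`2δ + 1` vertices of `A`, hence `|A| ≤ 4δ + 2`.
-/

namespace SimpleGraph

variable {G : SimpleGraph V} {r a b : V}

theorem dagReach_of_dist_eq_add (hab : G.Reachable a b)
    (h : G.dist r a = G.dist r b + G.dist a b) : dagReach G r a b := by
  induction hn : G.dist a b generalizing a with
  | zero =>
    rw [← hab.dist_eq_zero_iff.1 hn]
    exact Relation.ReflTransGen.refl
  | succ n ih =>
    obtain ⟨w, hw⟩ := hab.exists_walk_length_eq_dist
    cases w with
    | nil => simp only [Walk.length_nil] at hw; omega
    | @cons _ a' _ hadj w' =>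
      have hw' : w'.length = G.dist a' b :=
        length_eq_dist_of_subwalk hw (w'.isSubwalk_cons hadj)
      have ha'b : G.dist a' b = n := by simp only [Walk.length_cons] at hw; omega
      have hra : G.dist r a ≤ G.dist r a' + 1 := by
        simpa [dist_eq_one_iff_adj.2 hadj.symm] using hadj.symm.reachable.dist_triangle_right r
      have hra' : G.dist r a' ≤ G.dist r b + n := by
        simpa [dist_comm (u := b), ha'b] using w'.reachable.symm.dist_triangle_right r
      exact .head ⟨hadj, by omega⟩ (ih w'.reachable (by omega) ha'b)

theorem dist_lt_dist_add_of_not_dagReach (hab : G.Reachable a b) (h : ¬ dagReach G r a b) :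
    G.dist r a < G.dist r b + G.dist a b := by
  refine lt_of_le_of_ne ?_ fun heq => h (dagReach_of_dist_eq_add hab heq)
  simpa [dist_comm] using hab.symm.dist_triangle_right r

namespace Walk

variable {x y : V} {p : G.Walk x y}

theorem reachable_of_mem_support (ha : a ∈ p.support) (hb : b ∈ p.support) :
    G.Reachable a b := by
  classical
  exact (p.takeUntil a ha).reachable.symm.trans (p.takeUntil b hb).reachable

theorem dist_add_dist_of_length_eq_dist (hp : p.length = G.dist x y) (ha : a ∈ p.support) :
    G.dist x a + G.dist a y = G.dist x y := by
  classical
  rw [← length_eq_dist_of_subwalk hp (p.isSubwalk_takeUntil ha),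
    ← length_eq_dist_of_subwalk hp (p.isSubwalk_dropUntil ha), ← length_append,
    p.take_spec ha, hp]

theorem dist_add_dist_eq_of_length_eq_dist (hp : p.length = G.dist x y) (ha : a ∈ p.support)
    (hb : b ∈ p.support) (hab : G.dist x a ≤ G.dist x b) :
    G.dist x a + G.dist a b = G.dist x b := by
  classical
  have hxa := dist_add_dist_of_length_eq_dist hp ha
  have hxb := dist_add_dist_of_length_eq_dist hp hb
  rw [← p.take_spec ha, mem_support_append_iff] at hb
  rcases hb with hb | hb
  · have hxba := dist_add_dist_of_length_eq_dist
      (length_eq_dist_of_subwalk hp (p.isSubwalk_takeUntil ha)) hb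
    rw [dist_comm (u := b)] at hxba
    omega
  · have haby := dist_add_dist_of_length_eq_dist
      (length_eq_dist_of_subwalk hp (p.isSubwalk_dropUntil ha)) hb
    omega

end Walk

end SimpleGraph

namespace FourPointHyp

variable {G : SimpleGraph V} {δ : ℝ}

theorem le_or_le_of_dist_eq_add (h : FourPointHyp G δ) (r : V) {a b c : V}
    (hb : G.dist a c = G.dist a b + G.dist b c) :
    (G.dist r b + G.dist a b : ℝ) ≤ G.dist r a + 2 * δ ∨
      (G.dist r b + G.dist b c : ℝ) ≤ G.dist r c + 2 * δ := by
  have hfour := h r b a c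
  have hac : (G.dist a c : ℝ) = G.dist a b + G.dist b c := by exact_mod_cast hb
  rw [dist_comm (u := b) (v := a)] at hfour
  rcases max_choice ((G.dist r a : ℝ) + G.dist b c) (G.dist r c + G.dist a b) with hm | hm <;>
    rw [hm] at hfour
  · left; linarith
  · right; linarith

theorem sub_le_or_sub_le_of_length_eq_dist (h : FourPointHyp G δ) (r : V) {x y a b c : V}
    {p : G.Walk x y} (hp : p.length = G.dist x y) (ha : a ∈ p.support) (hb : b ∈ p.support)
    (hc : c ∈ p.support) (hab : G.dist x a ≤ G.dist x b) (hbc : G.dist x b ≤ G.dist x c) :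
    (((G.dist r b + G.dist x b) - (G.dist r a + G.dist x a) : ℤ) : ℝ) ≤ 2 * δ ∨
      (((G.dist r b - G.dist x b) - (G.dist r c - G.dist x c) : ℤ) : ℝ) ≤ 2 * δ := by
  have hab' := Walk.dist_add_dist_eq_of_length_eq_dist hp ha hb hab
  have hbc' := Walk.dist_add_dist_eq_of_length_eq_dist hp hb hc hbc
  have hac' := Walk.dist_add_dist_eq_of_length_eq_dist hp ha hc (hab.trans hbc)
  have habR : (G.dist x a + G.dist a b : ℝ) = G.dist x b := by exact_mod_cast hab'
  have hbcR : (G.dist x b + G.dist b c : ℝ) = G.dist x c := by exact_mod_cast hbc'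
  rcases h.le_or_le_of_dist_eq_add r (by omega : G.dist a c = G.dist a b + G.dist b c)
    with h | h
  · left; push_cast; linarith
  · right; push_cast; linarith

end FourPointHyp

namespace Finset

variable {α : Type*} {s : Finset α}

theorem card_le_of_injOn_of_sub_le {f : α → ℤ} (hf : Set.InjOn f s) {m : ℤ} {D : ℝ}
    (hD : 0 ≤ D) (hm : ∀ b ∈ s, m ≤ f b) (hfm : ∀ b ∈ s, ((f b - m : ℤ) : ℝ) ≤ D) :
    (s.card : ℝ) ≤ D + 1 := by
  have hmaps : ∀ b ∈ s, f b ∈ Icc m (m + ⌊D⌋) := fun b hb =>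
    mem_Icc.2 ⟨hm b hb, by have := Int.le_floor.2 (hfm b hb); omega⟩
  have hcard := card_le_card_of_injOn f hmaps hf
  rw [Int.card_Icc] at hcard
  have hcard' : (s.card : ℤ) ≤ ⌊D⌋ + 1 := by have := Int.floor_nonneg.2 hD; omega
  calc (s.card : ℝ) = ((s.card : ℤ) : ℝ) := rfl
    _ ≤ ⌊D⌋ + 1 := by exact_mod_cast hcard'
    _ ≤ D + 1 := by linarith [Int.floor_le D]

theorem card_le_of_forall_sub_le_or_sub_le {β : Type*} [LinearOrder β] (pos : α → β)
    (u v : α → ℤ) {D : ℝ} (hD : 0 ≤ D)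
    (hu : ∀ a ∈ s, ∀ b ∈ s, a ≠ b → pos a ≤ pos b → u a < u b)
    (hv : ∀ a ∈ s, ∀ b ∈ s, a ≠ b → pos a ≤ pos b → v b < v a)
    (hsplit : ∀ a ∈ s, ∀ b ∈ s, ∀ c ∈ s, pos a ≤ pos b → pos b ≤ pos c →
      ((u b - u a : ℤ) : ℝ) ≤ D ∨ ((v b - v c : ℤ) : ℝ) ≤ D) :
    (s.card : ℝ) ≤ 2 * D + 2 := by
  classical
  rcases s.eq_empty_or_nonempty with rfl | hs
  · simp only [card_empty, Nat.cast_zero]; linarith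
  have hinj : ∀ f : α → ℤ, (∀ a ∈ s, ∀ b ∈ s, a ≠ b → pos a ≤ pos b → f a ≠ f b) →
      Set.InjOn f s := fun f hf a ha b hb hab => by
    by_contra hne
    rcases le_total (pos a) (pos b) with h | h
    · exact hf a ha b hb hne h hab
    · exact hf b hb a ha (Ne.symm hne) h hab.symm
  obtain ⟨a, ha, hmin⟩ := s.exists_min_image pos hs
  obtain ⟨c, hc, hmax⟩ := s.exists_max_image pos hs
  have hua : ∀ b ∈ s, u a ≤ u b := fun b hb => by
    rcases eq_or_ne a b with rfl | hab
    · rfl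
    · exact (hu a ha b hb hab (hmin b hb)).le
  have hvc : ∀ b ∈ s, v c ≤ v b := fun b hb => by
    rcases eq_or_ne b c with rfl | hbc
    · rfl
    · exact (hv b hb c hc hbc (hmax b hb)).le
  set s₁ := s.filter fun b => ((u b - u a : ℤ) : ℝ) ≤ D
  set s₂ := s.filter fun b => ((v b - v c : ℤ) : ℝ) ≤ D
  have hcover : s ⊆ s₁ ∪ s₂ := fun b hb => by
    simpa [s₁, s₂, hb] using hsplit a ha b hb c hc (hmin b hb) (hmax b hb)
  have hs₁ : (s₁.card : ℝ) ≤ D + 1 :=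
    card_le_of_injOn_of_sub_le
      ((hinj u fun a ha b hb hab h => (hu a ha b hb hab h).ne).mono (filter_subset _ _))
      hD (fun b hb => hua b (mem_filter.1 hb).1) fun b hb => (mem_filter.1 hb).2
  have hs₂ : (s₂.card : ℝ) ≤ D + 1 :=
    card_le_of_injOn_of_sub_le
      ((hinj v fun a ha b hb hab h => (hv a ha b hb hab h).ne').mono (filter_subset _ _))
      hD (fun b hb => hvc b (mem_filter.1 hb).1) fun b hb => (mem_filter.1 hb).2
  calc (s.card : ℝ) ≤ s₁.card + s₂.card := by
        exact_mod_cast (card_le_card hcover).trans (card_union_le _ _)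
    _ ≤ 2 * D + 2 := by linarith

end Finset

theorem statement3_general (G : SimpleGraph V) (δ : ℝ) (hδ : 0 ≤ δ)
    (hhyp : FourPointHyp G δ) (r : V) {x y : V} (p : G.Walk x y)
    (hp : IsIsometricPath G p) (A : Finset V) (hA : ∀ a ∈ A, a ∈ p.support)
    (hanti : IsAntichainSet G r A) :
    (A.card : ℝ) ≤ 4 * δ + 3 := by
  have hpos : ∀ a ∈ A, ∀ b ∈ A, G.dist x a ≤ G.dist x b →
      G.dist x a + G.dist a b = G.dist x b := fun a ha b hb =>
    Walk.dist_add_dist_eq_of_length_eq_dist hp.2 (hA a ha) (hA b hb)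
  have hlt : ∀ a ∈ A, ∀ b ∈ A, a ≠ b → G.dist r a < G.dist r b + G.dist a b :=
    fun a ha b hb hab => dist_lt_dist_add_of_not_dagReach
      (Walk.reachable_of_mem_support (hA a ha) (hA b hb)) (hanti a ha b hb hab).1
  have hcard := A.card_le_of_forall_sub_le_or_sub_le (G.dist x)
    (fun b => G.dist r b + G.dist x b) (fun b => G.dist r b - G.dist x b)
    (by linarith : 0 ≤ 2 * δ)
    (fun a ha b hb hab h => by
      have := hpos a ha b hb h
      have := hlt a ha b hb hab
      omega)
    (fun a ha b hb hab h => by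
      have := hpos a ha b hb h
      have := hlt b hb a ha hab.symm
      rw [dist_comm (u := b)] at this
      omega)
    (fun a ha b hb c hc =>
      hhyp.sub_le_or_sub_le_of_length_eq_dist r hp.2 (hA a ha) (hA b hb) (hA c hc))
  linarith

/-- In a connected `δ`-hyperbolic graph, for every vertex `r` and
every isometric path `p`, every antichain (w.r.t. `r`) among the vertices of `p`
has size at most `4δ + 3`; hence the isometric path complexity is at most `4δ + 3`. -/
theorem statement3 (G : SimpleGraph V) (hG : G.Connected) (δ : ℝ) (hδ : 0 ≤ δ)
    (hhyp : FourPointHyp G δ) (r : V) {x y : V} (p : G.Walk x y)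
    (hp : IsIsometricPath G p) (A : Finset V) (hA : ∀ a ∈ A, a ∈ p.support)
    (hanti : IsAntichainSet G r A) :
    (A.card : ℝ) ≤ 4 * δ + 3 :=
  statement3_general G δ hδ hhyp r p hp A hA hanti
end

section
/- Let G be a connected graph, r a vertex, P an isometric (u,v)-path in G, and Q a subpath of an isometric (v,r)-path in G with v as one endpoint of Q. Let P' be the maximal (u,w)-subpath of P such that no internal vertex of P' is adjacent to a vertex of Q. Then the maximum antichain (w.r.t. r) among vertices of P' has size at least that of P minus 3. -/
open SimpleGraph

variable {V : Type*}

/-- Along any walk whose length exactly realizes the distance drop to `r`,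
we get a directed path in the BFS DAG. -/
lemma dagReach_of_walk (G : SimpleGraph V) (hG : G.Connected) (r : V) :
    ∀ {x y : V} (p : G.Walk x y), G.dist r x = G.dist r y + p.length →
      dagReach G r x y := by
  intro x y p
  induction p with
  | nil => intro _; exact Relation.ReflTransGen.refl
  | cons h q ih =>
    rename_i a b c
    intro hd
    simp only [SimpleGraph.Walk.length_cons] at hd
    have h1 : G.dist r b ≤ G.dist r c + q.length := by
      calc G.dist r b ≤ G.dist r c + G.dist c b := hG.dist_triangle
        _ ≤ G.dist r c + q.length := by
            have := SimpleGraph.dist_le q.reverse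
            simp only [SimpleGraph.Walk.length_reverse] at this
            omega
    have h2 : G.dist r a ≤ G.dist r b + 1 := by
      calc G.dist r a ≤ G.dist r b + G.dist b a := hG.dist_triangle
        _ ≤ G.dist r b + 1 := by
            have : G.dist b a ≤ 1 := by
              simpa using SimpleGraph.dist_le h.symm.toWalk
            omega
    have hb : G.dist r b = G.dist r c + q.length := by omega
    exact Relation.ReflTransGen.head ⟨h, by omega⟩ (ih hb)

/-- If the distance from `r` drops by exactly `d(x,y)`, then `x` dag-reaches `y`. -/
lemma dagReach_of_dist (G : SimpleGraph V) (hG : G.Connected) (r x y : V)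
    (h : G.dist r x = G.dist r y + G.dist x y) : dagReach G r x y := by
  obtain ⟨p, hp⟩ := hG.exists_walk_length_eq_dist x y
  exact dagReach_of_walk G hG r p (by rw [hp]; exact h)

/-- Splitting a shortest walk at a support vertex. -/
lemma dist_split [DecidableEq V] (G : SimpleGraph V) (hG : G.Connected) {a b : V} (p : G.Walk a b)
    (hp : p.length = G.dist a b) {x : V} (hx : x ∈ p.support) :
    G.dist a x = (p.takeUntil x hx).length ∧ G.dist x b = (p.dropUntil x hx).length := by
  have hsum : (p.takeUntil x hx).length + (p.dropUntil x hx).length = p.length := by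
    have := congrArg SimpleGraph.Walk.length (p.take_spec hx)
    rwa [SimpleGraph.Walk.length_append] at this
  have h1 : G.dist a x ≤ (p.takeUntil x hx).length := SimpleGraph.dist_le _
  have h2 : G.dist x b ≤ (p.dropUntil x hx).length := SimpleGraph.dist_le _
  have h3 : G.dist a b ≤ G.dist a x + G.dist x b := hG.dist_triangle
  omega

lemma dist_add_of_mem [DecidableEq V] (G : SimpleGraph V) (hG : G.Connected) {a b : V} (p : G.Walk a b)
    (hp : p.length = G.dist a b) {x : V} (hx : x ∈ p.support) :
    G.dist a x + G.dist x b = G.dist a b := by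
  obtain ⟨h1, h2⟩ := dist_split G hG p hp hx
  have hsum : (p.takeUntil x hx).length + (p.dropUntil x hx).length = p.length := by
    have := congrArg SimpleGraph.Walk.length (p.take_spec hx)
    rwa [SimpleGraph.Walk.length_append] at this
  omega

/-- Two vertices on a shortest path with the same "potential"
`d(r,·) + d(v,·)` are comparable in the BFS DAG. -/
lemma comp_of_eq_potential [DecidableEq V] (G : SimpleGraph V) (hG : G.Connected)
    (r : V) {v w : V} (W : G.Walk v w) (hW : W.length = G.dist v w) {x y : V}
    (hx : x ∈ W.support) (hy : y ∈ W.support)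
    (hg : G.dist r x + G.dist v x = G.dist r y + G.dist v y) :
    dagReach G r x y ∨ dagReach G r y x := by
  have hxsplit := dist_split G hG W hW hx
  have hvy : y ∈ ((W.takeUntil x hx).append (W.dropUntil x hx)).support := by
    rw [W.take_spec hx]; exact hy
  rw [SimpleGraph.Walk.mem_support_append_iff] at hvy
  rcases hvy with hyT | hyD
  · -- y lies before x
    right
    have hT : (W.takeUntil x hx).length = G.dist v x := hxsplit.1.symm
    have h1 : G.dist v y + G.dist y x = G.dist v x :=
      dist_add_of_mem G hG _ hT hyT
    refine dagReach_of_dist G hG r y x ?_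
    have := G.dist_comm (u := x) (v := y)
    omega
  · -- y lies after x
    left
    have hD : (W.dropUntil x hx).length = G.dist x w := hxsplit.2.symm
    have h1 : G.dist x y + G.dist y w = G.dist x w :=
      dist_add_of_mem G hG _ hD hyD
    have h2 : G.dist v x + G.dist x w = G.dist v w :=
      dist_add_of_mem G hG W hW hx
    have h3 : G.dist v y + G.dist y w = G.dist v w :=
      dist_add_of_mem G hG W hW hy
    have h4 : G.dist v y ≤ G.dist v x + G.dist x y := hG.dist_triangle
    refine dagReach_of_dist G hG r x y ?_
    omega

/-- Let `P = P1 ++ P2` be an isometric `(u,v)`-path, `Q` a subpath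
(with endpoint `v`) of an isometric `(v,r)`-path `Q ++ R`, and let `P1` (from `u`
to `w`) be the maximal prefix of `P` none of whose internal vertices has a
neighbour in `Q`.  Then every antichain (w.r.t. `r`) among the vertices of `P`
is, up to 3 elements, matched by an antichain among the vertices of `P1`:
the maximum antichain of `P1` has size at least that of `P` minus 3. -/
theorem statement5 (G : SimpleGraph V) (hG : G.Connected) (r u v w m : V)
    (P1 : G.Walk u w) (P2 : G.Walk w v) (hP : IsIsometricPath G (P1.append P2))
    (Q : G.Walk v m) (R : G.Walk m r) (hQR : IsIsometricPath G (Q.append R))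
    (hint : ∀ a ∈ P1.support, a ≠ u → a ≠ w → ∀ b ∈ Q.support, ¬ G.Adj a b)
    (hmax : P2.length = 0 ∨ ∃ b ∈ Q.support, G.Adj w b)
    (A : Finset V) (hA : ∀ a ∈ A, a ∈ (P1.append P2).support)
    (hanti : IsAntichainSet G r A) :
    ∃ A' : Finset V, (∀ a ∈ A', a ∈ P1.support) ∧ IsAntichainSet G r A' ∧
      A.card ≤ A'.card + 3 := by
  classical
  have hlen12 : P1.length + P2.length = G.dist u v := by
    have := hP.2; rwa [SimpleGraph.Walk.length_append] at this
  have hP2dist : P2.length = G.dist w v := by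
    have h1 : G.dist u w ≤ P1.length := SimpleGraph.dist_le P1
    have h2 : G.dist w v ≤ P2.length := SimpleGraph.dist_le P2
    have h3 : G.dist u v ≤ G.dist u w + G.dist w v := hG.dist_triangle
    omega
  rcases hmax with h0 | ⟨b0, hb0Q, hwb0⟩
  · -- `P2` is trivial : all of `A` already lies on `P1`.
    refine ⟨A, ?_, hanti, by omega⟩
    intro a ha
    have haP := hA a ha
    rw [SimpleGraph.Walk.mem_support_append_iff] at haP
    rcases haP with h | h
    · exact h
    · have hsup : P2.support = [w] := by
        have hlen : P2.support.length = 1 := by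
          rw [SimpleGraph.Walk.length_support, h0]
        rcases hs : P2.support with _ | ⟨c, l⟩
        · exact absurd hs P2.support_ne_nil
        · have hc : c = w := by
            have := P2.support_eq_cons
            rw [hs] at this; exact (List.cons.injEq _ _ _ _ ▸ this).1
          rw [hs] at hlen
          simp only [List.length_cons] at hlen
          have : l = [] := List.length_eq_zero_iff.mp (by omega)
          rw [hc, this]
      rw [hsup] at h
      simp only [List.mem_singleton] at h
      subst h
      exact P1.end_mem_support
  · -- `w` has a neighbour `b0` on `Q`.
    set W := P2.reverse with hWdef
    have hW : W.length = G.dist v w := by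
      rw [hWdef, SimpleGraph.Walk.length_reverse, hP2dist, G.dist_comm]
    have hQRlen : (Q.append R).length = G.dist v r := hQR.2
    have hb0 : G.dist v b0 + G.dist b0 r = G.dist v r :=
      dist_add_of_mem G hG _ hQRlen
        (SimpleGraph.Walk.subset_support_append_left Q R hb0Q)
    have hdb0w : G.dist b0 w ≤ 1 := by
      simpa using SimpleGraph.dist_le hwb0.symm.toWalk
    set n := G.dist r v with hn
    have hbound : ∀ z ∈ W.support,
        n ≤ G.dist r z + G.dist v z ∧ G.dist r z + G.dist v z ≤ n + 2 := by
      intro z hz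
      have hsplit : G.dist v z + G.dist z w = G.dist v w :=
        dist_add_of_mem G hG W hW hz
      have hlow : G.dist r v ≤ G.dist r z + G.dist z v := hG.dist_triangle
      have hczv : G.dist z v = G.dist v z := G.dist_comm
      have h1 : G.dist r z ≤ G.dist r w + G.dist w z := hG.dist_triangle
      have h2 : G.dist r w ≤ G.dist r b0 + G.dist b0 w := hG.dist_triangle
      have h3 : G.dist v w ≤ G.dist v b0 + G.dist b0 w := hG.dist_triangle
      have h4 : G.dist w z = G.dist z w := G.dist_comm
      have h5 : G.dist r b0 = G.dist b0 r := G.dist_comm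
      have h6 : G.dist r v = G.dist v r := G.dist_comm
      omega
    have hmemW : ∀ z ∈ A, z ∉ P1.support → z ∈ W.support := by
      intro z hz hz1
      have := hA z hz
      rw [SimpleGraph.Walk.mem_support_append_iff] at this
      rcases this with h | h
      · exact absurd h hz1
      · rwa [hWdef, SimpleGraph.Walk.support_reverse, List.mem_reverse]
    refine ⟨A.filter (· ∈ P1.support), fun a ha => (Finset.mem_filter.mp ha).2,
      fun a ha b hb hab => hanti a (Finset.mem_filter.mp ha).1 b
        (Finset.mem_filter.mp hb).1 hab, ?_⟩
    have hcard := Finset.card_filter_add_card_filter_not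
      (s := A) (p := (· ∈ P1.support))
    have hB : (A.filter (fun z => ¬ z ∈ P1.support)).card ≤ 3 := by
      have hinj : ∀ z ∈ A.filter (fun z => ¬ z ∈ P1.support),
          (fun z => G.dist r z + G.dist v z) z ∈ ({n, n+1, n+2} : Finset ℕ) := by
        intro z hz
        obtain ⟨hzA, hz1⟩ := Finset.mem_filter.mp hz
        obtain ⟨hl, hh⟩ := hbound z (hmemW z hzA hz1)
        simp only [Finset.mem_insert, Finset.mem_singleton]
        omega
      calc (A.filter (fun z => ¬ z ∈ P1.support)).card
          ≤ ({n, n+1, n+2} : Finset ℕ).card := by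
            apply Finset.card_le_card_of_injOn _ hinj
            intro x hx y hy hxy
            by_contra hne
            obtain ⟨hxA, hx1⟩ := Finset.mem_filter.mp hx
            obtain ⟨hyA, hy1⟩ := Finset.mem_filter.mp hy
            have hcomp := comp_of_eq_potential G hG r W hW
              (hmemW x hxA hx1) (hmemW y hyA hy1) hxy
            obtain ⟨h1, h2⟩ := hanti x hxA y hyA hne
            tauto
        _ ≤ 3 := by
            refine le_trans (Finset.card_insert_le _ _) ?_
            refine le_trans (Nat.add_le_add_right (Finset.card_insert_le _ _) 1) ?_
            simp
    omega
end

section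
/- Let G be a connected graph, r a vertex (root), x a vertex (source), and v ≠ x. Then γ→(v) = max over u ∈ I(x,v) ∩ N(v) with d(r,u) = d(r,v) of (1 + γ(u)), where γ(u) is the maximum over isometric (x,u)-paths P of the minimum number of r-rooted isometric paths needed to cover the vertices of P, and γ→(v) is that same maximum restricted to isometric (x,v)-paths whose vertex adjacent to v (second-to-last vertex) is at distance d(r,v) from r. (If the defining set is empty both sides are 0, with the convention that max over the empty set is 0.) -/
open SimpleGraph

variable {V : Type*}

/-- The minimum number of `r`-rooted isometric paths needed to cover the vertices
of the path `p` (denoted `|C_r(p)|`). -/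
noncomputable def coverNum (G : SimpleGraph V) (r : V) {x y : V} (p : G.Walk x y) : ℕ :=
  sInf {k | CoveredBy G r p k}

open Classical in
/-- `γ(u)` (w.r.t. root `r` and source `x`): the maximum of `|C_r(P)|` over all
isometric `(x,u)`-paths `P`, with the convention `γ(x,x) = 1`. -/
noncomputable def gammaFn (G : SimpleGraph V) (r x u : V) : ℕ :=
  if x = u then 1
  else sSup {n | ∃ p : G.Walk x u, IsIsometricPath G p ∧ n = coverNum G r p}

/-- `γ→(v)`: the maximum of `|C_r(P)|` over isometric `(x,v)`-paths `P` whose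
second-to-last vertex is at distance `d(r,v)` from `r`. -/
noncomputable def gammaRight (G : SimpleGraph V) (r x v : V) : ℕ :=
  sSup {n | ∃ p : G.Walk x v, IsIsometricPath G p ∧
    G.dist r (p.getVert (p.length - 1)) = G.dist r v ∧ n = coverNum G r p}

/-- The interval `I(x,v)`: vertices lying on some isometric `(x,v)`-path. -/
def interval (G : SimpleGraph V) (x v : V) : Set V :=
  {w | ∃ p : G.Walk x v, IsIsometricPath G p ∧ w ∈ p.support}

/-! Write an isometric `(x,v)`-path as `q` followed by the edge `uv`. When `d(r,u) = d(r,v)`,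
appending `v` raises the cover number by exactly one: an `r`-rooted isometric path through `v`
cannot meet `q`, since a common vertex `w` would give `d(w,v) ≤ d(w,u)` and then
`d(x,v) ≤ d(x,w) + d(w,u) = d(x,u)`. So `γ→(v)` is the maximum of `1 + |C_r(q)|` over the
admissible `u` and the isometric `(x,u)`-paths `q`, which is the right-hand side. -/

namespace SimpleGraph

variable {G : SimpleGraph V}

lemma Walk.length_eq_dist_left_of_append {x y z : V} {p : G.Walk x y} {q : G.Walk y z}
    (h : (p.append q).length = G.dist x z) : p.length = G.dist x y :=
  length_eq_dist_of_subwalk h (isSubwalk_of_append_left rfl)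

lemma Walk.length_eq_dist_right_of_append {x y z : V} {p : G.Walk x y} {q : G.Walk y z}
    (h : (p.append q).length = G.dist x z) : q.length = G.dist y z :=
  length_eq_dist_of_subwalk h (isSubwalk_of_append_right rfl)

lemma Walk.dist_add_dist_of_mem_support {x z w : V} {p : G.Walk x z}
    (hp : p.length = G.dist x z) (hw : w ∈ p.support) :
    G.dist x w + G.dist w z = G.dist x z := by
  obtain ⟨p₁, p₂, rfl⟩ := mem_support_iff_exists_append.mp hw
  have h₁ := length_eq_dist_left_of_append hp
  have h₂ := length_eq_dist_right_of_append hp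
  rw [length_append] at hp
  omega

lemma Walk.dist_add_dist_or_of_mem_support {r z v w : V} {R : G.Walk r z}
    (hR : R.length = G.dist r z) (hv : v ∈ R.support) (hw : w ∈ R.support) :
    G.dist r v + G.dist v w = G.dist r w ∨ G.dist r w + G.dist w v = G.dist r v := by
  obtain ⟨R₁, R₂, rfl⟩ := mem_support_iff_exists_append.mp hv
  rcases (mem_support_append_iff R₁ R₂).mp hw with hw₁ | hw₂
  · exact .inr (dist_add_dist_of_mem_support (length_eq_dist_left_of_append hR) hw₁)
  · have h₁ := dist_add_dist_of_mem_support (length_eq_dist_right_of_append hR) hw₂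
    have h₂ := dist_add_dist_of_mem_support hR hv
    have h₃ := dist_add_dist_of_mem_support hR hw
    omega

lemma Walk.disjoint_support_of_dist_eq (hG : G.Connected) {r z x u v : V} {q : G.Walk x u}
    (hq : q.length = G.dist x u) {R : G.Walk r z} (hR : R.length = G.dist r z)
    (hv : v ∈ R.support) (hru : G.dist r u = G.dist r v)
    (hxv : G.dist x v = G.dist x u + 1) : q.support.Disjoint R.support := by
  intro w hwq hwR
  have hxw := dist_add_dist_of_mem_support hq hwq
  have := hG.dist_triangle (u := x) (v := w) (w := v)
  have := hG.dist_triangle (u := r) (v := w) (w := u)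
  have := hG.dist_triangle (u := r) (v := u) (w := w)
  have := G.dist_comm (u := u) (v := w)
  have := G.dist_comm (u := v) (v := w)
  rcases dist_add_dist_or_of_mem_support hR hv hwR with h | h <;> omega

lemma isIsometricPath_concat_iff {x u v : V} {q : G.Walk x u} (h : G.Adj u v) :
    IsIsometricPath G (q.concat h) ↔ IsIsometricPath G q ∧ G.dist x v = G.dist x u + 1 := by
  constructor
  · rintro ⟨-, hlen⟩
    have hq := length_eq_dist_of_subwalk hlen (q.isSubwalk_concat h)
    rw [Walk.length_concat] at hlen
    exact ⟨⟨q.isPath_of_length_eq_dist hq, hq⟩, by omega⟩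
  · rintro ⟨⟨-, hq⟩, hxv⟩
    have hlen : (q.concat h).length = G.dist x v := by rw [Walk.length_concat, hq, hxv]
    exact ⟨(q.concat h).isPath_of_length_eq_dist hlen, hlen⟩

lemma dist_eq_dist_add_one_of_mem_interval {x u v : V} (hu : u ∈ interval G x v)
    (h : G.Adj u v) : G.dist x v = G.dist x u + 1 := by
  obtain ⟨p, ⟨-, hp⟩, hup⟩ := hu
  rw [← Walk.dist_add_dist_of_mem_support hp hup, dist_eq_one_iff_adj.mpr h]

end SimpleGraph

section CoverNum

variable {G : SimpleGraph V}

lemma coverNum_le {r x y : V} {p : G.Walk x y} {k : ℕ} (h : CoveredBy G r p k) :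
    coverNum G r p ≤ k :=
  Nat.sInf_le h

lemma coveredBy_length_add_one (hG : G.Connected) (r : V) {x y : V} (p : G.Walk x y) :
    CoveredBy G r p (p.length + 1) := by
  classical
  choose R hR using fun a => hG.exists_path_of_dist r a
  refine ⟨p.support.toFinset.image fun a => ⟨a, R a⟩, ?_, ?_, ?_⟩
  · calc _ ≤ p.support.toFinset.card := Finset.card_image_le
      _ ≤ p.support.length := List.toFinset_card_le _
      _ = p.length + 1 := p.length_support
  · simp only [Finset.mem_image, List.mem_toFinset]
    rintro _ ⟨a, -, rfl⟩
    exact hR a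
  · intro a ha
    exact ⟨⟨a, R a⟩, Finset.mem_image_of_mem _ (List.mem_toFinset.mpr ha), (R a).end_mem_support⟩

lemma coverNum_le_length_add_one (hG : G.Connected) (r : V) {x y : V} (p : G.Walk x y) :
    coverNum G r p ≤ p.length + 1 :=
  coverNum_le (coveredBy_length_add_one hG r p)

lemma coveredBy_coverNum (hG : G.Connected) (r : V) {x y : V} (p : G.Walk x y) :
    CoveredBy G r p (coverNum G r p) :=
  Nat.sInf_mem (s := {k | CoveredBy G r p k}) ⟨_, coveredBy_length_add_one hG r p⟩

lemma one_le_coverNum (hG : G.Connected) (r : V) {x y : V} (p : G.Walk x y) :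
    1 ≤ coverNum G r p := by
  obtain ⟨s, hcard, -, hcov⟩ := coveredBy_coverNum hG r p
  obtain ⟨R, hR, -⟩ := hcov x p.start_mem_support
  exact (Finset.card_pos.mpr ⟨R, hR⟩).trans_le hcard

lemma coverNum_nil (hG : G.Connected) (r x : V) : coverNum G r (Walk.nil : G.Walk x x) = 1 :=
  le_antisymm (coverNum_le_length_add_one hG r _) (one_le_coverNum hG r _)

lemma coverNum_concat_le (hG : G.Connected) (r : V) {x u v : V} (q : G.Walk x u)
    (h : G.Adj u v) : coverNum G r (q.concat h) ≤ coverNum G r q + 1 := by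
  classical
  obtain ⟨s, hcard, hiso, hcov⟩ := coveredBy_coverNum hG r q
  obtain ⟨R, hR⟩ := hG.exists_path_of_dist r v
  refine coverNum_le ⟨insert ⟨v, R⟩ s, (s.card_insert_le _).trans (by omega), ?_, ?_⟩
  · simp only [Finset.mem_insert, forall_eq_or_imp]
    exact ⟨hR, hiso⟩
  · intro a ha
    rw [Walk.support_concat, List.mem_append, List.mem_singleton] at ha
    rcases ha with ha | rfl
    · obtain ⟨t, ht, hat⟩ := hcov a ha
      exact ⟨t, Finset.mem_insert_of_mem ht, hat⟩
    · exact ⟨⟨a, R⟩, Finset.mem_insert_self _ _, R.end_mem_support⟩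

lemma coverNum_concat (hG : G.Connected) (r : V) {x u v : V} {q : G.Walk x u}
    (hq : q.length = G.dist x u) (h : G.Adj u v) (hru : G.dist r u = G.dist r v)
    (hxv : G.dist x v = G.dist x u + 1) :
    coverNum G r (q.concat h) = coverNum G r q + 1 := by
  classical
  refine le_antisymm (coverNum_concat_le hG r q h) ?_
  obtain ⟨s, hcard, hiso, hcov⟩ := coveredBy_coverNum hG r (q.concat h)
  obtain ⟨R, hRs, hvR⟩ := hcov v (q.concat h).end_mem_support
  have hdisj := Walk.disjoint_support_of_dist_eq hG hq (hiso R hRs).2 hvR hru hxv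
  have hcovq : CoveredBy G r q (s.card - 1) := by
    refine ⟨s.erase R, (Finset.card_erase_of_mem hRs).le,
      fun t ht => hiso t (s.mem_of_mem_erase ht), fun a ha => ?_⟩
    obtain ⟨t, ht, hat⟩ := hcov a ((q.isSubwalk_concat h).support_subset ha)
    refine ⟨t, Finset.mem_erase.mpr ⟨?_, ht⟩, hat⟩
    rintro rfl
    exact hdisj ha hat
  have := coverNum_le hcovq
  have := Finset.card_pos.mpr ⟨R, hRs⟩
  omega

lemma gammaFn_eq_sSup (hG : G.Connected) (r x u : V) :
    gammaFn G r x u = sSup {n | ∃ p : G.Walk x u, IsIsometricPath G p ∧ n = coverNum G r p} := by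
  classical
  unfold gammaFn
  split_ifs with hxu
  · subst hxu
    have : {n | ∃ p : G.Walk x x, IsIsometricPath G p ∧ n = coverNum G r p} = {1} := by
      ext n
      simp only [Set.mem_ofPred_eq, Set.mem_singleton_iff]
      constructor
      · rintro ⟨p, ⟨-, hp⟩, rfl⟩
        rw [dist_self, Walk.length_eq_zero_iff, ← Walk.eq_nil_iff_nil] at hp
        rw [hp, coverNum_nil hG]
      · rintro rfl
        exact ⟨.nil, ⟨.nil, by simp⟩, (coverNum_nil hG r x).symm⟩
    rw [this, csSup_singleton]
  · rfl

lemma bddAbove_coverNum_isometricPath (hG : G.Connected) (r x u : V) :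
    BddAbove {n | ∃ p : G.Walk x u, IsIsometricPath G p ∧ n = coverNum G r p} := by
  refine ⟨G.dist x u + 1, ?_⟩
  rintro _ ⟨p, ⟨-, hp⟩, rfl⟩
  exact hp ▸ coverNum_le_length_add_one hG r p

lemma coverNum_le_gammaFn (hG : G.Connected) (r : V) {x u : V} {q : G.Walk x u}
    (hq : IsIsometricPath G q) : coverNum G r q ≤ gammaFn G r x u := by
  rw [gammaFn_eq_sSup hG]
  exact le_csSup (bddAbove_coverNum_isometricPath hG r x u) ⟨q, hq, rfl⟩

lemma exists_coverNum_eq_gammaFn (hG : G.Connected) (r x u : V) :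
    ∃ q : G.Walk x u, IsIsometricPath G q ∧ coverNum G r q = gammaFn G r x u := by
  obtain ⟨q₀, hq₀⟩ := hG.exists_path_of_dist x u
  obtain ⟨q, hq, hγ⟩ :=
    Nat.sSup_mem (by exact ⟨_, q₀, hq₀, rfl⟩) (bddAbove_coverNum_isometricPath hG r x u)
  exact ⟨q, hq, by rw [gammaFn_eq_sSup hG, hγ]⟩

lemma gammaFn_le_dist_add_one (hG : G.Connected) (r x u : V) :
    gammaFn G r x u ≤ G.dist x u + 1 := by
  obtain ⟨q, ⟨-, hq⟩, hγ⟩ := exists_coverNum_eq_gammaFn hG r x u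
  exact hγ ▸ hq ▸ coverNum_le_length_add_one hG r q

lemma bddAbove_gammaRight (hG : G.Connected) (r x v : V) :
    BddAbove {n | ∃ p : G.Walk x v, IsIsometricPath G p ∧
      G.dist r (p.getVert (p.length - 1)) = G.dist r v ∧ n = coverNum G r p} :=
  (bddAbove_coverNum_isometricPath hG r x v).mono fun _ ⟨p, hp, _, hn⟩ => by exact ⟨p, hp, hn⟩

lemma bddAbove_one_add_gammaFn (hG : G.Connected) (r x v : V) :
    BddAbove {m : ℕ | ∃ u : V, u ∈ interval G x v ∧ G.Adj u v ∧
      G.dist r u = G.dist r v ∧ m = 1 + gammaFn G r x u} := by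
  refine ⟨G.dist x v + 1, ?_⟩
  rintro _ ⟨u, hu, huv, -, rfl⟩
  have := gammaFn_le_dist_add_one hG r x u
  have := dist_eq_dist_add_one_of_mem_interval hu huv
  omega

end CoverNum

theorem statement9_general (G : SimpleGraph V) (hG : G.Connected)
    (r x v : V) (hvx : v ≠ x) :
    gammaRight G r x v =
      sSup {m : ℕ | ∃ u : V, u ∈ interval G x v ∧ G.Adj u v ∧
        G.dist r u = G.dist r v ∧ m = 1 + gammaFn G r x u} := by
  apply le_antisymm
  · refine csSup_le' ?_
    rintro _ ⟨p, hp, hru, rfl⟩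
    obtain ⟨u, q, huv, rfl⟩ : ∃ u, ∃ (q : G.Walk x u) (h : G.Adj u v), p = q.concat h :=
      ⟨_, _, _, (Walk.concat_dropLast (p.adj_penultimate fun h => hvx h.eq.symm)).symm⟩
    rw [← Walk.penultimate, Walk.penultimate_concat] at hru
    obtain ⟨hq, hxv⟩ := (isIsometricPath_concat_iff huv).mp hp
    rw [coverNum_concat hG r hq.2 huv hru hxv, add_comm]
    refine le_csSup_of_le (bddAbove_one_add_gammaFn hG r x v)
      ⟨u, ⟨_, hp, (q.isSubwalk_concat huv).support_subset q.end_mem_support⟩, huv, hru, rfl⟩ ?_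
    exact Nat.add_le_add_left (coverNum_le_gammaFn hG r hq) 1
  · refine csSup_le' ?_
    rintro _ ⟨u, hu, huv, hru, rfl⟩
    have hxv := dist_eq_dist_add_one_of_mem_interval hu huv
    obtain ⟨q, hq, hγ⟩ := exists_coverNum_eq_gammaFn hG r x u
    refine le_csSup (bddAbove_gammaRight hG r x v) ⟨q.concat huv,
      (isIsometricPath_concat_iff huv).mpr ⟨hq, hxv⟩,
      by rwa [← Walk.penultimate, Walk.penultimate_concat], ?_⟩
    rw [coverNum_concat hG r hq.2 huv hru hxv, hγ, add_comm]

/-- For a connected graph with root `r`, source `x` and `v ≠ x`,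
`γ→(v) = max { 1 + γ(u) : u ∈ I(x,v) ∩ N(v), d(r,u) = d(r,v) }`, with the
convention that the maximum over the empty set is `0`. -/
theorem statement9 [Fintype V] (G : SimpleGraph V) (hG : G.Connected)
    (r x v : V) (hvx : v ≠ x) :
    gammaRight G r x v =
      sSup {m : ℕ | ∃ u : V, u ∈ interval G x v ∧ G.Adj u v ∧
        G.dist r u = G.dist r v ∧ m = 1 + gammaFn G r x u} :=
  statement9_general G hG r x v hvx
end

section
/- Let k ≥ 4 and let X_k be the graph consisting of k+1 internally disjoint paths P_1, ..., P_{k+1}, each of length k, sharing a common endpoint a, with other endpoints b_1, ..., b_{k+1}, plus the edges b_i b_{i+1} for i = 1, ..., k. Let G be obtained by taking two disjoint copies of X_k and identifying their apex vertices a. Then for every vertex r of G, there exists an isometric path Q of G with k vertices all at the same distance from r; consequently the isometric path antichain cover number of G is at least k. -/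
open SimpleGraph

variable {V : Type*}

/-- The graph obtained by taking two disjoint copies (indexed by `Bool`) of the
graph `X_k` (which consists of `k+1` internally disjoint paths of length `k`
from a common apex `a` to endpoints `b_1, …, b_{k+1}`, together with the edges
`b_i b_{i+1}`), and identifying the two apex vertices.  The vertex `none` is the
common apex; `some (s, i, j)` is the vertex of copy `s`, path `i`, at distance
`j + 1` from the apex (so `b_i` is `some (s, i, k-1)`). -/
def gluedX (k : ℕ) : SimpleGraph (Option (Bool × Fin (k + 1) × Fin k)) :=
  SimpleGraph.fromRel (fun x y =>
    match x, y with
    | none, some (_, _, j) => (j : ℕ) = 0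
    | some (s, i, j), some (s', i', j') =>
        s = s' ∧ ((i = i' ∧ (j : ℕ) + 1 = (j' : ℕ)) ∨
          ((j : ℕ) = k - 1 ∧ (j' : ℕ) = k - 1 ∧ (i : ℕ) + 1 = (i' : ℕ)))
    | _, _ => False)

/-!
Pick the copy of `X_k` not containing `r` and let `d = d(r, a)`. Since the apex `a` is a cut
vertex, every rim vertex `b_i` of that copy is at distance `d + k` from `r`, so the rim path
`b_1 ⋯ b_k` consists of `k` vertices equidistant from `r`, hence an antichain. Both this
distance and the isometry of the rim path are certified by integer potentials that change by
at most one along every edge: the depth (signed by the copy) and `min(i, depth)` on `P_i`.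
-/

namespace SimpleGraph

variable {G : SimpleGraph V}

def OneLipschitz (G : SimpleGraph V) (ψ : V → ℤ) : Prop :=
  ∀ ⦃x y : V⦄, G.Adj x y → |ψ x - ψ y| ≤ 1

lemma OneLipschitz.sub_le_length {ψ : V → ℤ} (hψ : G.OneLipschitz ψ) {u v : V}
    (p : G.Walk u v) : ψ v - ψ u ≤ p.length := by
  induction p with
  | nil => simp
  | cons h p ih =>
    have := (abs_le.mp (hψ h)).1
    push_cast [Walk.length_cons]
    linarith

lemma OneLipschitz.dist_eq_length {ψ : V → ℤ} (hψ : G.OneLipschitz ψ) {u v : V}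
    (p : G.Walk u v) (hp : (p.length : ℤ) ≤ ψ v - ψ u) : G.dist u v = p.length := by
  obtain ⟨q, hq⟩ := p.reachable.exists_walk_length_eq_dist
  have := hψ.sub_le_length q
  have := dist_le p
  omega

end SimpleGraph

lemma dagReach.dist_le {G : SimpleGraph V} {r a b : V} (h : dagReach G r a b) :
    G.dist r b ≤ G.dist r a := by
  induction h with
  | refl => rfl
  | tail _ hstep ih => have := hstep.2; omega

lemma dagReach.eq_of_dist_eq {G : SimpleGraph V} {r a b : V} (h : dagReach G r a b)
    (hd : G.dist r a = G.dist r b) : a = b := by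
  rcases Relation.ReflTransGen.cases_head h with rfl | ⟨c, hstep, hreach⟩
  · rfl
  · have := dagReach.dist_le hreach
    have := hstep.2
    omega

lemma isAntichainSet_of_dist_eq {G : SimpleGraph V} {r : V} {A : Finset V}
    (hA : ∀ a ∈ A, ∀ b ∈ A, G.dist r a = G.dist r b) : IsAntichainSet G r A :=
  fun a ha b hb hne =>
    ⟨fun h => hne (h.eq_of_dist_eq (hA a ha b hb)),
      fun h => hne (h.eq_of_dist_eq (hA b hb a ha)).symm⟩

namespace gluedX

variable {k : ℕ}

def rim (hk : 0 < k) (s : Bool) (i : Fin (k + 1)) : Option (Bool × Fin (k + 1) × Fin k) :=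
  some (s, i, ⟨k - 1, by omega⟩)

lemma adj_apex (s : Bool) (i : Fin (k + 1)) (j : Fin k) (hj : (j : ℕ) = 0) :
    (gluedX k).Adj none (some (s, i, j)) := by
  rw [gluedX, fromRel_adj]
  exact ⟨by simp, Or.inl hj⟩

lemma adj_spoke (s : Bool) (i : Fin (k + 1)) {j j' : Fin k} (h : (j : ℕ) + 1 = j') :
    (gluedX k).Adj (some (s, i, j)) (some (s, i, j')) := by
  rw [gluedX, fromRel_adj]
  refine ⟨?_, Or.inl ⟨rfl, Or.inl ⟨rfl, h⟩⟩⟩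
  simp only [ne_eq, Option.some.injEq, Prod.mk.injEq, true_and]
  rintro rfl
  omega

lemma adj_rim (hk : 0 < k) (s : Bool) {i i' : Fin (k + 1)} (h : (i : ℕ) + 1 = i') :
    (gluedX k).Adj (rim hk s i) (rim hk s i') := by
  rw [gluedX, fromRel_adj, rim, rim]
  refine ⟨?_, Or.inl ⟨rfl, Or.inr ⟨rfl, rfl, h⟩⟩⟩
  simp only [ne_eq, Option.some.injEq, Prod.mk.injEq, true_and, and_true]
  rintro rfl
  omega

lemma oneLipschitz_of {ψ : Option (Bool × Fin (k + 1) × Fin k) → ℤ}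
    (h_apex : ∀ s i (j : Fin k), (j : ℕ) = 0 → |ψ none - ψ (some (s, i, j))| ≤ 1)
    (h_spoke : ∀ s i (j j' : Fin k), (j : ℕ) + 1 = j' →
      |ψ (some (s, i, j)) - ψ (some (s, i, j'))| ≤ 1)
    (h_rim : ∀ s (i i' : Fin (k + 1)) (j j' : Fin k), (j : ℕ) = k - 1 → (j' : ℕ) = k - 1 →
      (i : ℕ) + 1 = i' → |ψ (some (s, i, j)) - ψ (some (s, i', j'))| ≤ 1) :
    (gluedX k).OneLipschitz ψ := by
  intro x y h
  rw [gluedX, fromRel_adj] at h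
  obtain ⟨-, h | h⟩ := h
  on_goal 2 => rw [abs_sub_comm]
  all_goals
    rcases x with _ | ⟨s, i, j⟩ <;> rcases y with _ | ⟨s', i', j'⟩ <;> first
      | exact h.elim
      | exact h_apex _ _ _ h
      | obtain ⟨rfl, ⟨rfl, hj⟩ | ⟨hj, hj', hi⟩⟩ := h
        exacts [h_spoke _ _ _ _ hj, h_rim _ _ _ _ _ hj hj' hi]

def spoke (s : Bool) (i : Fin (k + 1)) :
    (j : ℕ) → (h : j < k) → (gluedX k).Walk none (some (s, i, ⟨j, h⟩))
  | 0, h => .cons (adj_apex s i ⟨0, h⟩ rfl) .nil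
  | j + 1, h => (spoke s i j (by omega)).concat (adj_spoke s i rfl)

lemma length_spoke (s : Bool) (i : Fin (k + 1)) (j : ℕ) (h : j < k) :
    (spoke s i j h).length = j + 1 := by
  induction j with
  | zero => rfl
  | succ j ih => simp [spoke, ih]

def rimWalk (hk : 0 < k) (s : Bool) :
    (n : ℕ) → (h : n < k + 1) → (gluedX k).Walk (rim hk s 0) (rim hk s ⟨n, h⟩)
  | 0, _ => .nil
  | n + 1, h => (rimWalk hk s n (by omega)).concat (adj_rim hk s rfl)

lemma length_rimWalk (hk : 0 < k) (s : Bool) (n : ℕ) (h : n < k + 1) :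
    (rimWalk hk s n h).length = n := by
  induction n with
  | zero => rfl
  | succ n ih => simp [rimWalk, ih]

lemma mem_support_rimWalk (hk : 0 < k) (s : Bool) (n : ℕ) (h : n < k + 1)
    {v : Option (Bool × Fin (k + 1) × Fin k)} (hv : v ∈ (rimWalk hk s n h).support) :
    ∃ i, v = rim hk s i := by
  induction n with
  | zero => exact ⟨0, by simpa [rimWalk] using hv⟩
  | succ n ih =>
    rw [rimWalk, Walk.support_concat, List.mem_append, List.mem_singleton] at hv
    exact hv.elim (ih _) fun hv => ⟨_, hv⟩

def signedDepth (star : Bool) : Option (Bool × Fin (k + 1) × Fin k) → ℤ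
  | none => 0
  | some (s, _, j) => if s = star then (j : ℤ) + 1 else -((j : ℤ) + 1)

def rimCoord : Option (Bool × Fin (k + 1) × Fin k) → ℤ
  | none => 0
  | some (_, i, j) => min (i : ℤ) ((j : ℤ) + 1)

lemma oneLipschitz_signedDepth (star : Bool) : (gluedX k).OneLipschitz (signedDepth star) := by
  apply oneLipschitz_of <;> intros <;> simp only [signedDepth] <;> split_ifs <;>
    rw [abs_le] <;> omega

lemma oneLipschitz_rimCoord : (gluedX k).OneLipschitz rimCoord := by
  apply oneLipschitz_of <;> intros <;> simp only [rimCoord] <;> rw [abs_le] <;> omega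

lemma isIsometricPath_rimWalk (hk : 0 < k) (s : Bool) (n : ℕ) (h : n < k + 1) :
    IsIsometricPath (gluedX k) (rimWalk hk s n h) := by
  have hdist := oneLipschitz_rimCoord.dist_eq_length (rimWalk hk s n h) (by
    rw [length_rimWalk]
    simp only [rim, rimCoord, Fin.val_zero, Nat.cast_zero]
    omega)
  exact ⟨Walk.isPath_of_length_eq_dist _ hdist.symm, hdist.symm⟩

lemma exists_dist_rim_eq (hk : 0 < k) (r : Option (Bool × Fin (k + 1) × Fin k)) :
    ∃ (star : Bool) (d : ℕ), ∀ i, (gluedX k).dist r (rim hk star i) = d + k := by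
  obtain ⟨star, d, toApex, hlen, hr⟩ : ∃ (star : Bool) (d : ℕ) (p : (gluedX k).Walk r none),
      p.length = d ∧ signedDepth star r = -d := by
    rcases r with _ | ⟨s, i, j⟩
    · exact ⟨false, 0, .nil, rfl, rfl⟩
    · exact ⟨!s, j + 1, (spoke s i j j.isLt).reverse, by simp [length_spoke], by
        simp [signedDepth]⟩
  refine ⟨star, d, fun i => ?_⟩
  have := (oneLipschitz_signedDepth star).dist_eq_length
    (toApex.append (spoke star i (k - 1) (by omega))) (by
      rw [Walk.length_append, length_spoke, hlen, hr]
      simp only [signedDepth, if_pos]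
      omega)
  rw [rim, this, Walk.length_append, length_spoke, hlen]
  omega

end gluedX

open gluedX in
/-- For `k ≥ 4` and every vertex `r` of the glued graph, there is
an isometric path with `k` vertices, all at the same distance from `r`;
consequently its vertices form an antichain w.r.t. `r` of size at least `k`, so
the isometric path antichain cover number of the graph is at least `k`. -/
theorem statement11 (k : ℕ) (hk : 4 ≤ k) (r : Option (Bool × Fin (k + 1) × Fin k)) :
    ∃ (x y : Option (Bool × Fin (k + 1) × Fin k)) (p : (gluedX k).Walk x y),
      IsIsometricPath (gluedX k) p ∧ p.support.length = k ∧
      (∀ a ∈ p.support, (gluedX k).dist r a = (gluedX k).dist r x) ∧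
      ∃ A : Finset (Option (Bool × Fin (k + 1) × Fin k)),
        (∀ a ∈ A, a ∈ p.support) ∧ IsAntichainSet (gluedX k) r A ∧ k ≤ A.card := by
  have hk0 : 0 < k := by omega
  obtain ⟨star, d, hdist⟩ := exists_dist_rim_eq hk0 r
  set p := rimWalk hk0 star (k - 1) (by omega)
  have hp : IsIsometricPath (gluedX k) p := isIsometricPath_rimWalk hk0 star _ _
  have hlen : p.support.length = k := by
    rw [Walk.length_support, length_rimWalk]
    omega
  have hsame : ∀ a ∈ p.support, (gluedX k).dist r a = d + k := fun a ha => by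
    obtain ⟨i, rfl⟩ := mem_support_rimWalk hk0 star _ _ ha
    exact hdist i
  refine ⟨_, _, p, hp, hlen, fun a ha => by rw [hsame a ha, hsame _ p.start_mem_support],
    p.support.toFinset, fun a => List.mem_toFinset.mp, ?_, ?_⟩
  · refine isAntichainSet_of_dist_eq fun a ha b hb => ?_
    rw [hsame a (List.mem_toFinset.mp ha), hsame b (List.mem_toFinset.mp hb)]
  · rw [List.toFinset_card_of_nodup hp.1.support_nodup, hlen]
end

section
/- Let G be a connected graph, r a vertex, and suppose every isometric path P of G satisfies |A_r(P)| ≤ c, i.e., every antichain w.r.t. r among the vertices of an isometric path has size at most c. Then a minimum directed path cover of the BFS DAG G_r, together with extending each directed path to an r-rooted isometric path, yields an isometric path cover of G of size at most c times the isometric path number of G. Hence Isometric Path Cover admits a c-approximation when ipacc(G) ≤ c. -/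
/-!
Take a minimum isometric path cover and split each of its paths `P` greedily: starting from
a vertex `u` of `P`, cut off the longest segment of `P` whose last vertex `w` is comparable
with `u` in `G_r`. Along a path of `G_r`, `d(r, ·)` drops at least as fast as the distance
travelled, so on the geodesic `P` this forces `|d(r,u) - d(r,w)| = d(u,w)`; the segment,
prolonged by a shortest path from `r` to whichever of `u, w` is closer to `r`, is then an
`r`-rooted isometric path. The starting vertices of the segments are pairwise incomparable,
hence at most `c` segments are needed per path of the cover.
-/

open SimpleGraph

variable {V : Type*}

lemma exists_greedy_interval_cover (R : ℕ → ℕ → Prop) [DecidableRel R]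
    (hrefl : ∀ i, R i i) (hsymm : ∀ i j, R i j → R j i) (n t : ℕ) :
    ∃ T : Finset ℕ, T ⊆ Finset.Icc t n ∧ (T : Set ℕ).Pairwise (fun s s' => ¬ R s s') ∧
      ∀ i, t ≤ i → i ≤ n → ∃ s ∈ T, s ≤ i ∧ i ≤ Nat.findGreatest (R s) n := by
  by_cases htn : n < t
  · exact ⟨∅, by simp, by simp, fun i hti hin => by omega⟩
  set e := Nat.findGreatest (R t) n
  have hte : t ≤ e := Nat.le_findGreatest (by omega) (hrefl t)
  obtain ⟨T, hT, hTpair, hTcov⟩ := exists_greedy_interval_cover R hrefl hsymm n (e + 1)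
  have hTgt : ∀ s ∈ T, e < s ∧ s ≤ n := fun s hs => by
    have := Finset.mem_Icc.mp (hT hs); omega
  refine ⟨insert t T, ?_, ?_, ?_⟩
  · refine Finset.insert_subset (Finset.mem_Icc.mpr ⟨le_rfl, by omega⟩) fun s hs => ?_
    have := hTgt s hs
    exact Finset.mem_Icc.mpr ⟨by omega, this.2⟩
  · rw [Finset.coe_insert, Set.pairwise_insert]
    refine ⟨hTpair, fun s hs _ => ?_⟩
    have hts : ¬ R t s := Nat.findGreatest_is_greatest (hTgt s hs).1 (hTgt s hs).2
    exact ⟨hts, fun h => hts (hsymm _ _ h)⟩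
  · intro i hti hin
    by_cases hie : i ≤ e
    · exact ⟨t, Finset.mem_insert_self t T, hti, hie⟩
    · obtain ⟨s, hs, hsi⟩ := hTcov i (by omega) hin
      exact ⟨s, Finset.mem_insert_of_mem hs, hsi⟩
termination_by n + 1 - t

namespace SimpleGraph

variable {G : SimpleGraph V} {r : V}

def DagComparable (G : SimpleGraph V) (r a b : V) : Prop :=
  dagReach G r a b ∨ dagReach G r b a

lemma DagComparable.refl (a : V) : DagComparable G r a a :=
  Or.inl .refl

lemma DagComparable.symm {a b : V} (h : DagComparable G r a b) : DagComparable G r b a :=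
  Or.symm h

lemma isAntichainSet_iff_pairwise {A : Finset V} :
    IsAntichainSet G r A ↔ (A : Set V).Pairwise fun a b => ¬ DagComparable G r a b := by
  simp only [IsAntichainSet, DagComparable, not_or, Set.Pairwise, Finset.mem_coe]

lemma dist_add_dist_le_of_dagReach {u v : V} (h : dagReach G r u v) :
    G.dist r v + G.dist u v ≤ G.dist r u := by
  suffices ∃ q : G.Walk u v, G.dist r u = G.dist r v + q.length by
    obtain ⟨q, hq⟩ := this
    have := dist_le q
    omega
  induction h using Relation.ReflTransGen.head_induction_on with
  | refl => exact ⟨.nil, rfl⟩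
  | head hstep _ ih =>
    obtain ⟨q, hq⟩ := ih
    refine ⟨.cons hstep.1 q, ?_⟩
    rw [Walk.length_cons, hstep.2, hq]
    omega

namespace Walk

lemma exists_rooted_isIsometricPath_of_dagReach {a b : V} (q : G.Walk a b)
    (hq : q.length = G.dist a b) (hra : G.Reachable r a) (hba : dagReach G r b a) :
    ∃ Q : G.Walk r b, IsIsometricPath G Q ∧ q.support ⊆ Q.support := by
  obtain ⟨g, hg⟩ := hra.exists_walk_length_eq_dist
  have hlen : (g.append q).length = G.dist r b := by
    have := dist_add_dist_le_of_dagReach hba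
    have := dist_le (g.append q)
    rw [length_append, hg, hq, dist_comm (u := a)] at *
    omega
  exact ⟨g.append q, ⟨(g.append q).isPath_of_length_eq_dist hlen, hlen⟩,
    fun v hv => (mem_support_append_iff g q).mpr (Or.inr hv)⟩

lemma exists_rooted_isIsometricPath_of_dagComparable (hG : G.Connected) {a b : V}
    (q : G.Walk a b) (hq : q.length = G.dist a b) (hab : DagComparable G r a b) :
    ∃ Q : Σ v, G.Walk r v, IsIsometricPath G Q.2 ∧ q.support ⊆ Q.2.support := by
  rcases hab with hab | hba
  · obtain ⟨Q, hQ, hsub⟩ := q.reverse.exists_rooted_isIsometricPath_of_dagReach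
      (by rw [length_reverse, hq, dist_comm]) (hG r b) hab
    exact ⟨⟨a, Q⟩, hQ, fun v hv => hsub (by rwa [support_reverse, List.mem_reverse])⟩
  · obtain ⟨Q, hQ, hsub⟩ := q.exists_rooted_isIsometricPath_of_dagReach hq (hG r a) hba
    exact ⟨⟨b, Q⟩, hQ, hsub⟩

lemma exists_geodesic_segment {x y : V} (p : G.Walk x y) (hp : p.length = G.dist x y)
    {t j : ℕ} (htj : t ≤ j) :
    ∃ q : G.Walk (p.getVert t) (p.getVert j), q.length = G.dist (p.getVert t) (p.getVert j) ∧
      ∀ i, t ≤ i → i ≤ j → p.getVert i ∈ q.support := by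
  have hend : (p.drop t).getVert (j - t) = p.getVert j := by
    rw [drop_getVert, Nat.add_sub_cancel' htj]
  set q := (p.drop t).take (j - t)
  have hsub : (q.copy rfl hend).IsSubwalk p :=
    ((isSubwalk_take _ _).trans (isSubwalk_drop _ _)).copy rfl hend rfl rfl
  refine ⟨q.copy rfl hend, length_eq_dist_of_subwalk hp hsub, fun i hti hij => ?_⟩
  have : p.getVert i = q.getVert (i - t) := by
    rw [take_getVert, drop_getVert, min_eq_right (by omega), Nat.add_sub_cancel' hti]
  rw [support_copy, this]
  exact q.getVert_mem_support _

end Walk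

lemma card_le_of_pairwise_not_dagComparable {x y : V} {p : G.Walk x y} {c : ℕ}
    (hc : ∀ A : Finset V, (∀ a ∈ A, a ∈ p.support) → IsAntichainSet G r A → A.card ≤ c)
    {T : Finset ℕ}
    (hT : (T : Set ℕ).Pairwise fun s s' => ¬ DagComparable G r (p.getVert s) (p.getVert s')) :
    T.card ≤ c := by
  classical
  have hinj : Set.InjOn p.getVert T := fun s hs s' hs' heq => by
    by_contra hne
    exact hT hs hs' hne (heq ▸ DagComparable.refl _)
  have hanti : IsAntichainSet G r (T.image p.getVert) := by
    rw [isAntichainSet_iff_pairwise, Finset.coe_image, hinj.pairwise_image]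
    exact hT
  rw [← Finset.card_image_of_injOn hinj]
  refine hc _ (fun a ha => ?_) hanti
  obtain ⟨s, -, rfl⟩ := Finset.mem_image.mp ha
  exact p.getVert_mem_support s

lemma coveredBy_of_length_eq_dist (hG : G.Connected) {x y : V} {p : G.Walk x y}
    (hp : p.length = G.dist x y) {c : ℕ}
    (hc : ∀ A : Finset V, (∀ a ∈ A, a ∈ p.support) → IsAntichainSet G r A → A.card ≤ c) :
    CoveredBy G r p c := by
  classical
  set R : ℕ → ℕ → Prop := fun i j => DagComparable G r (p.getVert i) (p.getVert j)
  obtain ⟨T, hT, hTpair, hTcov⟩ := exists_greedy_interval_cover R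
    (fun _ => DagComparable.refl _) (fun _ _ => DagComparable.symm) p.length 0
  have hseg : ∀ s ∈ T, ∃ Q : Σ v, G.Walk r v, IsIsometricPath G Q.2 ∧
      ∀ i, s ≤ i → i ≤ Nat.findGreatest (R s) p.length → p.getVert i ∈ Q.2.support := by
    intro s hs
    have hsn : s ≤ p.length := (Finset.mem_Icc.mp (hT hs)).2
    obtain ⟨q, hq, hqsupp⟩ := p.exists_geodesic_segment hp
      (Nat.le_findGreatest (P := R s) hsn (DagComparable.refl _))
    obtain ⟨Q, hQ, hsub⟩ := q.exists_rooted_isIsometricPath_of_dagComparable hG hq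
      (Nat.findGreatest_spec (P := R s) hsn (DagComparable.refl _))
    exact ⟨Q, hQ, fun i h1 h2 => hsub (hqsupp i h1 h2)⟩
  choose Q hQ using hseg
  refine ⟨T.attach.image fun s => Q s.1 s.2, ?_, ?_, ?_⟩
  · calc (T.attach.image fun s => Q s.1 s.2).card ≤ T.card :=
          Finset.card_image_le.trans (Finset.card_attach).le
      _ ≤ c := card_le_of_pairwise_not_dagComparable hc hTpair
  · simp only [Finset.mem_image, Finset.mem_attach, true_and, forall_exists_index,
      Subtype.forall]
    rintro _ s hs rfl
    exact (hQ s hs).1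
  · intro a ha
    obtain ⟨i, rfl, hi⟩ := Walk.mem_support_iff_exists_getVert.mp ha
    obtain ⟨s, hs, hsi, his⟩ := hTcov i (Nat.zero_le i) hi
    exact ⟨Q s hs, Finset.mem_image_of_mem _ (Finset.mem_attach _ ⟨s, hs⟩), (hQ s hs).2 i hsi his⟩

lemma exists_rooted_cover_of_forall_coveredBy {c : ℕ} (T : Finset (Σ x y : V, G.Walk x y))
    (hT : ∀ p ∈ T, CoveredBy G r p.2.2 c) (hcov : ∀ v, ∃ p ∈ T, v ∈ p.2.2.support) :
    ∃ S : Finset (Σ x y : V, G.Walk x y),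
      (∀ p ∈ S, IsIsometricPath G p.2.2) ∧ (∀ p ∈ S, p.1 = r) ∧
      (∀ v, ∃ p ∈ S, v ∈ p.2.2.support) ∧ S.card ≤ c * T.card := by
  classical
  choose s hscard hsiso hscov using hT
  let root : (Σ v : V, G.Walk r v) → Σ x y : V, G.Walk x y := fun q => ⟨r, q.1, q.2⟩
  refine ⟨T.attach.biUnion fun p => (s p.1 p.2).image root, ?_, ?_, ?_, ?_⟩
  · simp only [Finset.mem_biUnion, Finset.mem_image, forall_exists_index, and_imp]
    rintro _ ⟨p, hp⟩ - q hq rfl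
    exact hsiso p hp q hq
  · simp only [Finset.mem_biUnion, Finset.mem_image, forall_exists_index, and_imp]
    rintro _ - - q - rfl
    rfl
  · intro v
    obtain ⟨p, hp, hv⟩ := hcov v
    obtain ⟨q, hq, hqv⟩ := hscov p hp v hv
    exact ⟨root q, Finset.mem_biUnion.mpr ⟨⟨p, hp⟩, Finset.mem_attach _ _,
      Finset.mem_image_of_mem _ hq⟩, hqv⟩
  · calc _ ≤ ∑ p ∈ T.attach, ((s p.1 p.2).image root).card := Finset.card_biUnion_le
      _ ≤ ∑ _p ∈ T.attach, c := Finset.sum_le_sum fun p _ =>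
          Finset.card_image_le.trans (hscard p.1 p.2)
      _ = c * T.card := by rw [Finset.sum_const, Finset.card_attach, smul_eq_mul, mul_comm]

noncomputable def isometricPathNumber (G : SimpleGraph V) : ℕ :=
  sInf {n : ℕ | ∃ T : Finset (Σ x y : V, G.Walk x y),
    (∀ p ∈ T, IsIsometricPath G p.2.2) ∧ (∀ v : V, ∃ p ∈ T, v ∈ p.2.2.support) ∧ T.card = n}

lemma exists_isometricPath_cover_card_eq [Fintype V] (G : SimpleGraph V) :
    ∃ T : Finset (Σ x y : V, G.Walk x y), (∀ p ∈ T, IsIsometricPath G p.2.2) ∧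
      (∀ v, ∃ p ∈ T, v ∈ p.2.2.support) ∧ T.card = G.isometricPathNumber := by
  classical
  let T : Finset (Σ x y : V, G.Walk x y) := Finset.univ.image fun v => ⟨v, v, .nil⟩
  have hT : (∀ p ∈ T, IsIsometricPath G p.2.2) ∧ ∀ v, ∃ p ∈ T, v ∈ p.2.2.support := by
    refine ⟨?_, fun v => ⟨⟨v, v, .nil⟩, by simp [T]⟩⟩
    simp only [T, Finset.mem_image, Finset.mem_univ, true_and, forall_exists_index]
    rintro _ v rfl
    exact ⟨.nil, by simp⟩
  exact Nat.sInf_mem (s := {n | ∃ T : Finset (Σ x y : V, G.Walk x y),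
    (∀ p ∈ T, IsIsometricPath G p.2.2) ∧ (∀ v : V, ∃ p ∈ T, v ∈ p.2.2.support) ∧ T.card = n})
    ⟨T.card, T, hT.1, hT.2, rfl⟩

end SimpleGraph

/-- If every antichain w.r.t. `r` among the vertices of any
isometric path of a connected graph `G` has size at most `c`, then `G` has an
isometric path cover consisting of `r`-rooted isometric paths whose size is at
most `c` times the isometric path number of `G` (the minimum size of an
isometric path cover). -/
theorem statement14 [Fintype V] (G : SimpleGraph V) (hG : G.Connected) (r : V) (c : ℕ)
    (h : ∀ (x y : V) (p : G.Walk x y), IsIsometricPath G p →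
      ∀ A : Finset V, (∀ a ∈ A, a ∈ p.support) → IsAntichainSet G r A → A.card ≤ c) :
    ∃ S : Finset (Σ x y : V, G.Walk x y),
      (∀ p ∈ S, IsIsometricPath G p.2.2) ∧ (∀ p ∈ S, p.1 = r) ∧
      (∀ v : V, ∃ p ∈ S, v ∈ p.2.2.support) ∧
      S.card ≤ c * sInf {n : ℕ | ∃ T : Finset (Σ x y : V, G.Walk x y),
        (∀ p ∈ T, IsIsometricPath G p.2.2) ∧ (∀ v : V, ∃ p ∈ T, v ∈ p.2.2.support) ∧
        T.card = n} := by
  obtain ⟨T, hTiso, hTcov, hTcard⟩ := G.exists_isometricPath_cover_card_eq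
  have hT : ∀ p ∈ T, CoveredBy G r p.2.2 c := fun p hp =>
    coveredBy_of_length_eq_dist hG (hTiso p hp).2 (h _ _ p.2.2 (hTiso p hp))
  obtain ⟨S, hSiso, hSroot, hScov, hScard⟩ := exists_rooted_cover_of_forall_coveredBy T hT hTcov
  exact ⟨S, hSiso, hSroot, hScov, hScard.trans_eq (congrArg (c * ·) hTcard)⟩
end

section
/- Let G be a connected graph and r, u, v, w vertices such that u lies on an isometric path P with d(r,u) = min over vertices p of P of d(r,p), v is an endpoint of P, and w is a vertex of the subpath of P from u to v with |A_r(P_{u,w})| ≥ 4 where P_{u,w} is the (u,w)-subpath. Then u is not adjacent to any vertex of any isometric (r,v)-path Q; indeed, if u were adjacent to a vertex of Q, then d(u,v) ≤ 2 + d(r,v) − d(r,u), contradicting d(u,v) ≥ |d(r,v) − d(r,u)| + |A_r(P_{u,v})| − 1 when |A_r(P_{u,v})| ≥ 4. -/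
open SimpleGraph

variable {V : Type*}

lemma adj_dist_le (G : SimpleGraph V) (hG : G.Connected) (r : V) {x y : V}
    (h : G.Adj x y) : G.dist r y ≤ G.dist r x + 1 := by
  have h1 : G.dist x y ≤ 1 := by
    simpa using SimpleGraph.dist_le (SimpleGraph.Walk.cons h SimpleGraph.Walk.nil)
  calc G.dist r y ≤ G.dist r x + G.dist x y := hG.dist_triangle
    _ ≤ G.dist r x + 1 := by omega

lemma key_all [DecidableEq V] (G : SimpleGraph V) (hG : G.Connected) (r : V) :
    ∀ n : ℕ, ∀ x y : V, ∀ W : G.Walk x y, W.length = n →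
      ((∀ A : Finset V, IsAntichainSet G r A → (∀ b ∈ A, b ∈ W.support) →
        |(G.dist r x : ℤ) - G.dist r y| + A.card ≤ (W.length : ℤ) + 1) ∧
      (∀ A : Finset V, ∀ a₀ : V, IsAntichainSet G r (insert a₀ A) → a₀ ∉ A →
        (∀ b ∈ A, b ∈ W.support) → dagReach G r a₀ x →
        ((G.dist r x : ℤ) - G.dist r y) + A.card ≤ (W.length : ℤ)) ∧
      (∀ A : Finset V, ∀ a₀ : V, IsAntichainSet G r (insert a₀ A) → a₀ ∉ A →
        (∀ b ∈ A, b ∈ W.support) → dagReach G r x a₀ →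
        ((G.dist r y : ℤ) - G.dist r x) + A.card ≤ (W.length : ℤ))) := by
  intro n
  induction n using Nat.strong_induction_on with
  | _ n IH =>
    intro x y W hW
    cases W with
    | nil =>
      refine ⟨?_, ?_, ?_⟩
      · intro A hanti hsub
        have : A ⊆ {x} := by
          intro b hb; simpa using hsub b hb
        have hc : A.card ≤ 1 := le_trans (Finset.card_le_card this) (by simp)
        simp only [SimpleGraph.Walk.length_nil]
        have : |(G.dist r x : ℤ) - G.dist r x| = 0 := by simp
        rw [this]
        push_cast; omega
      · intro A a₀ hanti ha₀ hsub hreach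
        have hAe : A = ∅ := by
          by_contra hne
          obtain ⟨b, hb⟩ := Finset.nonempty_iff_ne_empty.mpr hne
          have hbx : b = x := by simpa using hsub b hb
          subst hbx
          have hne' : a₀ ≠ b := fun h => ha₀ (h ▸ hb)
          exact (hanti a₀ (Finset.mem_insert_self _ _) b
            (Finset.mem_insert_of_mem hb) hne').1 hreach
        subst hAe; simp
      · intro A a₀ hanti ha₀ hsub hreach
        have hAe : A = ∅ := by
          by_contra hne
          obtain ⟨b, hb⟩ := Finset.nonempty_iff_ne_empty.mpr hne
          have hbx : b = x := by simpa using hsub b hb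
          subst hbx
          have hne' : a₀ ≠ b := fun h => ha₀ (h ▸ hb)
          exact (hanti a₀ (Finset.mem_insert_self _ _) b
            (Finset.mem_insert_of_mem hb) hne').2 hreach
        subst hAe; simp
    | @cons x x' y h W' =>
      -- lengths
      have hlen : W'.length < n := by
        simp [SimpleGraph.Walk.length_cons] at hW; omega
      have IH' := IH W'.length hlen x' y W' rfl
      obtain ⟨C1, Cd, Cu⟩ := IH'
      have hstep1 : G.dist r x' ≤ G.dist r x + 1 := adj_dist_le G hG r h
      have hstep2 : G.dist r x ≤ G.dist r x' + 1 := adj_dist_le G hG r h.symm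
      have hsupp : ∀ b ∈ (SimpleGraph.Walk.cons h W').support, b = x ∨ b ∈ W'.support := by
        intro b hb
        simpa using hb
      refine ⟨?_, ?_, ?_⟩
      -- C1
      · intro A hanti hsub
        by_cases hx : x ∈ A
        · set A' := A.erase x with hA'
          have hxA' : x ∉ A' := Finset.notMem_erase _ _
          have hins : insert x A' = A := Finset.insert_erase hx
          have hanti' : IsAntichainSet G r (insert x A') := hins ▸ hanti
          have hsub' : ∀ b ∈ A', b ∈ W'.support := by
            intro b hb
            have hbA : b ∈ A := Finset.mem_of_mem_erase hb
            have hbx : b ≠ x := Finset.ne_of_mem_erase hb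
            rcases hsupp b (hsub b hbA) with h1 | h1
            · exact absurd h1 hbx
            · exact h1
          have hcard : (A'.card : ℤ) = A.card - 1 := by
            rw [hA', Finset.card_erase_of_mem hx]
            have : 1 ≤ A.card := Finset.card_pos.mpr ⟨x, hx⟩
            push_cast; omega
          have hC1' := C1 A' (fun a ha b hb hab => hanti a (Finset.mem_of_mem_erase ha)
            b (Finset.mem_of_mem_erase hb) hab) hsub'
          -- case on step type
          rcases lt_trichotomy (G.dist r x') (G.dist r x) with hst | hst | hst
          · -- down step
            have hd : G.dist r x = G.dist r x' + 1 := by omega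
            have hreach : dagReach G r x x' := Relation.ReflTransGen.single ⟨h, hd⟩
            have hCd := Cd A' x hanti' hxA' hsub' hreach
            simp only [SimpleGraph.Walk.length_cons]
            rcases abs_cases ((G.dist r x : ℤ) - G.dist r y) with ⟨he, _⟩ | ⟨he, _⟩ <;>
              rcases abs_cases ((G.dist r x' : ℤ) - G.dist r y) with ⟨he', _⟩ | ⟨he', _⟩ <;>
              push_cast at hC1' hCd ⊢ <;> omega
          · -- flat step
            simp only [SimpleGraph.Walk.length_cons]
            rcases abs_cases ((G.dist r x : ℤ) - G.dist r y) with ⟨he, _⟩ | ⟨he, _⟩ <;>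
              rcases abs_cases ((G.dist r x' : ℤ) - G.dist r y) with ⟨he', _⟩ | ⟨he', _⟩ <;>
              push_cast at hC1' ⊢ <;> omega
          · -- up step
            have hd : G.dist r x' = G.dist r x + 1 := by omega
            have hreach : dagReach G r x' x := Relation.ReflTransGen.single ⟨h.symm, hd⟩
            have hCu := Cu A' x hanti' hxA' hsub' hreach
            simp only [SimpleGraph.Walk.length_cons]
            rcases abs_cases ((G.dist r x : ℤ) - G.dist r y) with ⟨he, _⟩ | ⟨he, _⟩ <;>
              rcases abs_cases ((G.dist r x' : ℤ) - G.dist r y) with ⟨he', _⟩ | ⟨he', _⟩ <;>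
              push_cast at hC1' hCu ⊢ <;> omega
        · have hsub' : ∀ b ∈ A, b ∈ W'.support := by
            intro b hb
            rcases hsupp b (hsub b hb) with h1 | h1
            · exact absurd (h1 ▸ hb) hx
            · exact h1
          have hC1' := C1 A hanti hsub'
          simp only [SimpleGraph.Walk.length_cons]
          rcases abs_cases ((G.dist r x : ℤ) - G.dist r y) with ⟨he, _⟩ | ⟨he, _⟩ <;>
            rcases abs_cases ((G.dist r x' : ℤ) - G.dist r y) with ⟨he', _⟩ | ⟨he', _⟩ <;>
            push_cast at hC1' ⊢ <;> omega
      -- Cdown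
      · intro A a₀ hanti ha₀ hsub hreach
        have hx : x ∉ A := by
          intro hx
          have hne : a₀ ≠ x := fun hh => ha₀ (hh ▸ hx)
          exact (hanti a₀ (Finset.mem_insert_self _ _) x
            (Finset.mem_insert_of_mem hx) hne).1 hreach
        have hsub' : ∀ b ∈ A, b ∈ W'.support := by
          intro b hb
          rcases hsupp b (hsub b hb) with h1 | h1
          · exact absurd (h1 ▸ hb) hx
          · exact h1
        rcases lt_trichotomy (G.dist r x') (G.dist r x) with hst | hst | hst
        · have hd : G.dist r x = G.dist r x' + 1 := by omega
          have hreach' : dagReach G r a₀ x' := hreach.tail ⟨h, hd⟩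
          have hCd := Cd A a₀ hanti ha₀ hsub' hreach'
          simp only [SimpleGraph.Walk.length_cons]
          push_cast at hCd ⊢; omega
        · have hanti' : IsAntichainSet G r A := fun a ha b hb hab =>
            hanti a (Finset.mem_insert_of_mem ha) b (Finset.mem_insert_of_mem hb) hab
          have hC1' := C1 A hanti' hsub'
          simp only [SimpleGraph.Walk.length_cons]
          rcases abs_cases ((G.dist r x' : ℤ) - G.dist r y) with ⟨he', _⟩ | ⟨he', _⟩ <;>
            push_cast at hC1' ⊢ <;> omega
        · have hanti' : IsAntichainSet G r A := fun a ha b hb hab =>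
            hanti a (Finset.mem_insert_of_mem ha) b (Finset.mem_insert_of_mem hb) hab
          have hC1' := C1 A hanti' hsub'
          simp only [SimpleGraph.Walk.length_cons]
          rcases abs_cases ((G.dist r x' : ℤ) - G.dist r y) with ⟨he', _⟩ | ⟨he', _⟩ <;>
            push_cast at hC1' ⊢ <;> omega
      -- Cup
      · intro A a₀ hanti ha₀ hsub hreach
        have hx : x ∉ A := by
          intro hx
          have hne : a₀ ≠ x := fun hh => ha₀ (hh ▸ hx)
          exact (hanti a₀ (Finset.mem_insert_self _ _) x
            (Finset.mem_insert_of_mem hx) hne).2 hreach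
        have hsub' : ∀ b ∈ A, b ∈ W'.support := by
          intro b hb
          rcases hsupp b (hsub b hb) with h1 | h1
          · exact absurd (h1 ▸ hb) hx
          · exact h1
        rcases lt_trichotomy (G.dist r x') (G.dist r x) with hst | hst | hst
        · have hanti' : IsAntichainSet G r A := fun a ha b hb hab =>
            hanti a (Finset.mem_insert_of_mem ha) b (Finset.mem_insert_of_mem hb) hab
          have hC1' := C1 A hanti' hsub'
          simp only [SimpleGraph.Walk.length_cons]
          rcases abs_cases ((G.dist r x' : ℤ) - G.dist r y) with ⟨he', _⟩ | ⟨he', _⟩ <;>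
            push_cast at hC1' ⊢ <;> omega
        · have hanti' : IsAntichainSet G r A := fun a ha b hb hab =>
            hanti a (Finset.mem_insert_of_mem ha) b (Finset.mem_insert_of_mem hb) hab
          have hC1' := C1 A hanti' hsub'
          simp only [SimpleGraph.Walk.length_cons]
          rcases abs_cases ((G.dist r x' : ℤ) - G.dist r y) with ⟨he', _⟩ | ⟨he', _⟩ <;>
            push_cast at hC1' ⊢ <;> omega
        · have hd : G.dist r x' = G.dist r x + 1 := by omega
          have hreach' : dagReach G r x' a₀ := Relation.ReflTransGen.head ⟨h.symm, hd⟩ hreach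
          have hCu := Cu A a₀ hanti ha₀ hsub' hreach'
          simp only [SimpleGraph.Walk.length_cons]
          push_cast at hCu ⊢; omega

lemma key_ineq [DecidableEq V] (G : SimpleGraph V) (hG : G.Connected) (r : V) {x y : V} (W : G.Walk x y)
    (A : Finset V) (hanti : IsAntichainSet G r A) (hsub : ∀ b ∈ A, b ∈ W.support) :
    |(G.dist r x : ℤ) - G.dist r y| + A.card ≤ (W.length : ℤ) + 1 :=
  ((key_all G hG r W.length x y W rfl).1) A hanti hsub
lemma split_isometric (G : SimpleGraph V) (hG : G.Connected) {a u v : V}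
    (p : G.Walk a u) (q : G.Walk u v) (h : (p.append q).length = G.dist a v) :
    q.length = G.dist u v ∧ p.length = G.dist a u := by
  have h1 : G.dist a u ≤ p.length := SimpleGraph.dist_le p
  have h2 : G.dist u v ≤ q.length := SimpleGraph.dist_le q
  have h3 : G.dist a v ≤ G.dist a u + G.dist u v := hG.dist_triangle
  have h4 : (p.append q).length = p.length + q.length := SimpleGraph.Walk.length_append p q
  omega


/-- Let `P = P1 ++ P2` be an isometric path with endpoint `v`,
where `u` is a vertex of `P` minimizing the distance to `r` among the vertices
of `P`, and suppose some antichain (w.r.t. `r`) among the vertices of the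
`(u,v)`-subpath `P2` has size at least `4`.  Then `u` is not adjacent to any
vertex of any isometric `(r,v)`-path `Q`. -/
theorem statement15 (G : SimpleGraph V) (hG : G.Connected) (r a u v : V)
    (P1 : G.Walk a u) (P2 : G.Walk u v) (hP : IsIsometricPath G (P1.append P2))
    (hmin : ∀ p ∈ (P1.append P2).support, G.dist r u ≤ G.dist r p)
    (A : Finset V) (hA : ∀ x ∈ A, x ∈ P2.support) (hanti : IsAntichainSet G r A)
    (hcard : 4 ≤ A.card) :
    ∀ (Q : G.Walk r v), IsIsometricPath G Q → ∀ q ∈ Q.support, ¬ G.Adj u q := by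
  classical
  intro Q hQ q hq hadj
  -- P2 is a shortest path
  have hP2 : P2.length = G.dist u v := (split_isometric G hG P1 P2 hP.2).1
  -- key inequality
  have hkey := key_ineq G hG r P2 A hanti hA
  -- u minimizes distance, in particular dist r u ≤ dist r v
  have huv : G.dist r u ≤ G.dist r v :=
    hmin v (SimpleGraph.Walk.end_mem_support _)
  -- split Q at q
  have hQsplit := Q.take_spec hq
  have hQlen : (Q.takeUntil q hq).length + (Q.dropUntil q hq).length = Q.length := by
    have := congrArg SimpleGraph.Walk.length hQsplit
    rwa [SimpleGraph.Walk.length_append] at this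
  have h1 : G.dist r q ≤ (Q.takeUntil q hq).length := SimpleGraph.dist_le _
  have h2 : G.dist q v ≤ (Q.dropUntil q hq).length := SimpleGraph.dist_le _
  have h3 : G.dist r v ≤ G.dist r q + G.dist q v := hG.dist_triangle
  have hQd : Q.length = G.dist r v := hQ.2
  -- so dist r v = dist r q + dist q v
  have heq : G.dist r v = G.dist r q + G.dist q v := by omega
  -- dist u v ≤ 1 + dist q v
  have h5 : G.dist u q ≤ 1 := by
    simpa using SimpleGraph.dist_le (SimpleGraph.Walk.cons hadj SimpleGraph.Walk.nil)
  have h6 : G.dist u v ≤ G.dist u q + G.dist q v := hG.dist_triangle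
  -- dist r u ≤ dist r q + 1
  have h7 : G.dist r u ≤ G.dist r q + 1 := adj_dist_le G hG r hadj.symm
  -- combine
  have habs : ((G.dist r v : ℤ) - G.dist r u) ≤ |(G.dist r u : ℤ) - G.dist r v| := by
    rw [abs_sub_comm]; exact le_abs_self _
  rw [hP2] at hkey
  have h8 : (4 : ℤ) ≤ A.card := by exact_mod_cast hcard
  have h6' : (G.dist u v : ℤ) ≤ G.dist u q + G.dist q v := by exact_mod_cast h6
  have h5' : (G.dist u q : ℤ) ≤ 1 := by exact_mod_cast h5
  have h7' : (G.dist r u : ℤ) ≤ G.dist r q + 1 := by exact_mod_cast h7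
  have heq' : (G.dist r v : ℤ) = G.dist r q + G.dist q v := by exact_mod_cast heq
  linarith
end
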